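/- arXiv:1307.6399 — 5 statements merged into one kernel-verified Lean document; each statement's English description precedes it below -/
import Mathlib

section
/- If A, B ⊆ ℝ are nonempty sets with B ⊆ [0, ε), then for any 0 < γ < ε, the covering number satisfies N_γ(A+B) ≥ (1/3) · N_ε(A) · N_γ(B). -/
/-!
Cut the line into the intervals `[kε, (k+1)ε)`. At least `N_ε(A)` of them meet `A`, and those
whose index lies in the most frequent residue class mod 3 (at least a third of them) are pairwise
more than `2ε` apart, so one point of `A` from each gives a set `T` with `|x - y| > 2ε` for distinct
`x, y ∈ T` and `N_ε(A) ≤ 3|T|`. As `B` has width less than `ε`, the translates `x + B ⊆ A + B`,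
`x ∈ T`, are then more than `ε > γ` apart: no set of diameter `γ` meets two of them, and each of
them needs `N_γ(B)` such sets, so `N_γ(A + B) ≥ |T| N_γ(B)`.
-/

open Set Pointwise

/-- The covering number of `Y` at scale `ε`: the minimal number of sets of
diameter at most `ε` needed to cover `Y`. -/
noncomputable def covN (ε : ℝ) (Y : Set ℝ) : ℕ :=
  sInf {n : ℕ | ∃ c : Fin n → Set ℝ,
    (∀ i, EMetric.diam (c i) ≤ ENNReal.ofReal ε) ∧ Y ⊆ ⋃ i, c i}

open Bornology

def coverSizes (ε : ℝ) (Y : Set ℝ) : Set ℕ :=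
  {n | ∃ c : Fin n → Set ℝ, (∀ i, Metric.ediam (c i) ≤ ENNReal.ofReal ε) ∧ Y ⊆ ⋃ i, c i}

lemma covN_eq_sInf_coverSizes (ε : ℝ) (Y : Set ℝ) : covN ε Y = sInf (coverSizes ε Y) := rfl

section CoveringNumber

variable {ε : ℝ} {Y : Set ℝ}

lemma card_mem_coverSizes {ι : Type*} [Fintype ι] (c : ι → Set ℝ)
    (hc : ∀ i, Metric.ediam (c i) ≤ ENNReal.ofReal ε) (hY : Y ⊆ ⋃ i, c i) :
    Fintype.card ι ∈ coverSizes ε Y := by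
  refine ⟨c ∘ (Fintype.equivFin ι).symm, fun i => hc _, fun y hy => ?_⟩
  obtain ⟨i, hi⟩ := mem_iUnion.mp (hY hy)
  exact mem_iUnion.mpr ⟨Fintype.equivFin ι i, by simpa using hi⟩

lemma covN_le_card {ι : Type*} [Fintype ι] (c : ι → Set ℝ)
    (hc : ∀ i, Metric.ediam (c i) ≤ ENNReal.ofReal ε) (hY : Y ⊆ ⋃ i, c i) :
    covN ε Y ≤ Fintype.card ι :=
  Nat.sInf_le (card_mem_coverSizes c hc hY)

lemma finite_image_floor_div (hε : 0 ≤ ε) (hY : IsBounded Y) :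
    ((fun x : ℝ => ⌊x / ε⌋) '' Y).Finite :=
  have hmono : Monotone fun x : ℝ => ⌊x / ε⌋ := fun _ _ h => Int.floor_mono (by gcongr)
  (hmono.map_bddBelow hY.bddBelow).finite_of_bddAbove (hmono.map_bddAbove hY.bddAbove)

lemma card_image_floor_div_mem_coverSizes (hε : 0 < ε) (hY : IsBounded Y) :
    (finite_image_floor_div hε.le hY).toFinset.card ∈ coverSizes ε Y := by
  have := card_mem_coverSizes (ε := ε) (Y := Y) (ι := (finite_image_floor_div hε.le hY).toFinset)
    (fun k => Ico (k * ε) ((k + 1) * ε)) (fun k => ?_) fun x hx => ?_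
  · simpa using this
  · rw [Real.ediam_Ico]
    exact ENNReal.ofReal_le_ofReal (by ring_nf; rfl)
  · refine mem_iUnion.mpr ⟨⟨⌊x / ε⌋, by simpa using ⟨x, hx, rfl⟩⟩, ?_, ?_⟩
    · simpa [le_div_iff₀ hε] using Int.floor_le (x / ε)
    · simpa [div_lt_iff₀ hε] using Int.lt_floor_add_one (x / ε)

lemma coverSizes_nonempty (hε : 0 < ε) (hY : IsBounded Y) : (coverSizes ε Y).Nonempty :=
  ⟨_, card_image_floor_div_mem_coverSizes hε hY⟩

lemma coverSizes_subset_coverSizes_vadd (x : ℝ) : coverSizes ε Y ⊆ coverSizes ε (x +ᵥ Y) := by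
  rintro n ⟨c, hc, hY⟩
  refine ⟨fun i => x +ᵥ c i, fun i => (ediam_vadd x (c i)).trans_le (hc i), ?_⟩
  rintro _ ⟨y, hy, rfl⟩
  obtain ⟨i, hi⟩ := mem_iUnion.mp (hY hy)
  exact mem_iUnion.mpr ⟨i, vadd_mem_vadd_set hi⟩

lemma covN_vadd (x : ℝ) : covN ε (x +ᵥ Y) = covN ε Y := by
  have hback := coverSizes_subset_coverSizes_vadd (ε := ε) (Y := x +ᵥ Y) (-x)
  rw [neg_vadd_vadd] at hback
  rw [covN_eq_sInf_coverSizes, covN_eq_sInf_coverSizes,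
    hback.antisymm (coverSizes_subset_coverSizes_vadd x)]

lemma sum_covN_le_covN {ι : Type*} {s : Finset ι} {Z : ι → Set ℝ} (hε : 0 < ε)
    (hY : IsBounded Y) (hZY : ∀ i ∈ s, Z i ⊆ Y)
    (hfar : (s : Set ι).Pairwise fun i j => ∀ y ∈ Z i, ∀ z ∈ Z j, ε < dist y z) :
    ∑ i ∈ s, covN ε (Z i) ≤ covN ε Y := by
  classical
  refine le_csInf (coverSizes_nonempty hε hY) ?_
  rintro n ⟨c, hc, hYc⟩
  let hits : ι → Finset (Fin n) := fun i => {k | (c k ∩ Z i).Nonempty}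
  have hcard : ∀ i ∈ s, covN ε (Z i) ≤ (hits i).card := by
    intro i hi
    refine (covN_le_card (fun k : hits i => c k) (fun k => hc k) fun z hz => ?_).trans_eq
      (Fintype.card_coe _)
    obtain ⟨k, hk⟩ := mem_iUnion.mp (hYc (hZY i hi hz))
    exact mem_iUnion.mpr ⟨⟨k, by simpa [hits] using ⟨z, hk, hz⟩⟩, hk⟩
  have hdisj : (s : Set ι).PairwiseDisjoint hits := by
    intro i hi j hj hij
    refine Finset.disjoint_left.mpr fun k hki hkj => ?_
    obtain ⟨y, hyc, hyZ⟩ : (c k ∩ Z i).Nonempty := by simpa [hits] using hki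
    obtain ⟨z, hzc, hzZ⟩ : (c k ∩ Z j).Nonempty := by simpa [hits] using hkj
    have hyz : dist y z ≤ ε :=
      (edist_le_ofReal hε.le).mp ((Metric.edist_le_ediam_of_mem hyc hzc).trans (hc k))
    exact (hfar hi hj hij y hyZ z hzZ).not_ge hyz
  calc ∑ i ∈ s, covN ε (Z i) ≤ ∑ i ∈ s, (hits i).card := Finset.sum_le_sum hcard
    _ = (s.biUnion hits).card := (Finset.card_biUnion hdisj).symm
    _ ≤ n := by simpa using Finset.card_le_univ (s.biUnion hits)

end CoveringNumber

lemma add_two_mul_lt_of_floor_div_add_three_le {ε x y : ℝ} (hε : 0 < ε)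
    (h : ⌊x / ε⌋ + 3 ≤ ⌊y / ε⌋) : x + 2 * ε < y := by
  have h' : (⌊x / ε⌋ : ℝ) + 3 ≤ ⌊y / ε⌋ := by exact_mod_cast h
  have : x / ε + 2 < y / ε := by linarith [Int.lt_floor_add_one (x / ε), Int.floor_le (y / ε)]
  rwa [div_add' _ _ _ hε.ne', div_lt_div_iff_of_pos_right hε] at this

lemma two_mul_lt_abs_sub_of_floor_div_emod_eq {ε x y : ℝ} (hε : 0 < ε)
    (hmod : ⌊x / ε⌋ % 3 = ⌊y / ε⌋ % 3) (hne : ⌊x / ε⌋ ≠ ⌊y / ε⌋) : 2 * ε < |x - y| := by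
  rcases (by omega : ⌊x / ε⌋ + 3 ≤ ⌊y / ε⌋ ∨ ⌊y / ε⌋ + 3 ≤ ⌊x / ε⌋) with h | h
  · exact lt_abs.mpr (.inr (by linarith [add_two_mul_lt_of_floor_div_add_three_le hε h]))
  · exact lt_abs.mpr (.inl (by linarith [add_two_mul_lt_of_floor_div_add_three_le hε h]))

lemma Finset.exists_card_le_mul_card_filter_emod_eq (s : Finset ℤ) {n : ℕ} (hn : 0 < n) :
    ∃ r : ℤ, s.card ≤ n * {k ∈ s | k % n = r}.card := by
  have hn' : (0 : ℤ) < n := by exact_mod_cast hn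
  obtain ⟨r, -, hr⟩ : ∃ r ∈ Finset.Ico (0 : ℤ) n, (s.card / n : ℚ) ≤ {k ∈ s | k % n = r}.card :=
    Finset.exists_le_card_fiber_of_nsmul_le_card_of_maps_to
      (fun k _ => Finset.mem_Ico.mpr ⟨Int.emod_nonneg k hn'.ne', Int.emod_lt_of_pos k hn'⟩)
      ⟨0, by simpa using hn'⟩ (by simp [mul_div_cancel₀, hn.ne'])
  exact ⟨r, by exact_mod_cast (div_le_iff₀' (Nat.cast_pos.mpr hn)).mp hr⟩

lemma exists_finset_separated_covN_le {ε : ℝ} {A : Set ℝ} (hε : 0 < ε) (hA : IsBounded A) :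
    ∃ T : Finset ℝ, ↑T ⊆ A ∧ (T : Set ℝ).Pairwise (fun x y => 2 * ε < |x - y|) ∧
      covN ε A ≤ 3 * T.card := by
  classical
  set hK := finite_image_floor_div hε.le hA
  obtain ⟨r, hr⟩ := hK.toFinset.exists_card_le_mul_card_filter_emod_eq three_pos
  set g := Function.invFunOn (fun x : ℝ => ⌊x / ε⌋) A
  have hg : ∀ k ∈ hK.toFinset, g k ∈ A ∧ ⌊g k / ε⌋ = k := fun k hk =>
    have hk' : ∃ x ∈ A, ⌊x / ε⌋ = k := by simpa using hk
    ⟨Function.invFunOn_mem hk', Function.invFunOn_eq hk'⟩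
  set Kr : Finset ℤ := {k ∈ hK.toFinset | k % 3 = r}
  have hginj : Set.InjOn g Kr := fun k hk l hl hkl => by
    rw [← (hg k (Finset.mem_filter.mp hk).1).2, ← (hg l (Finset.mem_filter.mp hl).1).2, hkl]
  refine ⟨Kr.image g, ?_, ?_, ?_⟩
  · intro x hx
    obtain ⟨k, hk, rfl⟩ := Finset.mem_image.mp hx
    exact (hg k (Finset.mem_filter.mp hk).1).1
  · intro x hx y hy hxy
    obtain ⟨k, hk, rfl⟩ := Finset.mem_image.mp hx
    obtain ⟨l, hl, rfl⟩ := Finset.mem_image.mp hy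
    obtain ⟨hkK, hkr⟩ := Finset.mem_filter.mp hk
    obtain ⟨hlK, hlr⟩ := Finset.mem_filter.mp hl
    refine two_mul_lt_abs_sub_of_floor_div_emod_eq hε ?_ ?_ <;> rw [(hg k hkK).2, (hg l hlK).2]
    · rw [hkr, hlr]
    · exact fun hkl => hxy (congrArg g hkl)
  · rw [Finset.card_image_of_injOn hginj]
    exact (Nat.sInf_le (card_image_floor_div_mem_coverSizes hε hA)).trans hr

lemma lt_dist_of_mem_vadd_of_mem_vadd {ε x y u v : ℝ} {B : Set ℝ} (hB : B ⊆ Ico 0 ε)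
    (hxy : 2 * ε < |x - y|) (hu : u ∈ x +ᵥ B) (hv : v ∈ y +ᵥ B) : ε < dist u v := by
  obtain ⟨b, hb, rfl⟩ := hu
  obtain ⟨b', hb', rfl⟩ := hv
  have hbb' : |b' - b| < ε := abs_sub_lt_iff.mpr ⟨by linarith [(hB hb).1, (hB hb').2],
    by linarith [(hB hb).2, (hB hb').1]⟩
  have htri : |x - y| ≤ |x + b - (y + b')| + |b' - b| :=
    calc |x - y| = |(x + b - (y + b')) + (b' - b)| := by ring_nf
      _ ≤ _ := abs_add_le _ _
  simp only [vadd_eq_add, Real.dist_eq]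
  linarith

theorem covering_number_sumset_general (A B : Set ℝ) (ε γ : ℝ)
    (hAbd : Bornology.IsBounded A)
    (hBsub : B ⊆ Set.Ico 0 ε) (hγ : 0 < γ) (hγε : γ < ε) :
    (covN γ (A + B) : ℝ) ≥ (1 / 3) * (covN ε A : ℝ) * (covN γ B : ℝ) := by
  obtain ⟨T, hTA, hTsep, hAT⟩ := exists_finset_separated_covN_le (hγ.trans hγε) hAbd
  have hfar : (T : Set ℝ).Pairwise fun x y => ∀ u ∈ x +ᵥ B, ∀ v ∈ y +ᵥ B, γ < dist u v :=
    fun x hx y hy hxy u hu v hv =>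
      hγε.trans (lt_dist_of_mem_vadd_of_mem_vadd hBsub (hTsep hx hy hxy) hu hv)
  have hT : T.card * covN γ B ≤ covN γ (A + B) :=
    calc T.card * covN γ B = ∑ x ∈ T, covN γ (x +ᵥ B) := by simp [covN_vadd]
      _ ≤ covN γ (A + B) :=
        sum_covN_le_covN hγ (hAbd.add ((Metric.isBounded_Ico 0 ε).subset hBsub))
          (fun x hx => vadd_set_subset_add (hTA hx)) hfar
  have hAT' : (covN ε A : ℝ) ≤ 3 * T.card := by exact_mod_cast hAT
  calc (1 / 3) * (covN ε A : ℝ) * covN γ B ≤ (1 / 3) * (3 * T.card) * covN γ B := by gcongr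
    _ = T.card * covN γ B := by ring
    _ ≤ covN γ (A + B) := by exact_mod_cast hT

/-- If `A, B ⊆ ℝ` are nonempty, `A` bounded, `B ⊆ [0, ε)`, and `0 < γ < ε`,
then `N_γ(A+B) ≥ (1/3) N_ε(A) N_γ(B)`. -/
theorem covering_number_sumset (A B : Set ℝ) (ε γ : ℝ)
    (hA : A.Nonempty) (hB : B.Nonempty) (hAbd : Bornology.IsBounded A)
    (hBsub : B ⊆ Set.Ico 0 ε) (hγ : 0 < γ) (hγε : γ < ε) :
    (covN γ (A + B) : ℝ) ≥ (1 / 3) * (covN ε A : ℝ) * (covN γ B : ℝ) :=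
  covering_number_sumset_general A B ε γ hAbd hBsub hγ hγε
end

section
/- Let θ be a tree-measure on the full binary tree of height h, and let ∂θ be the induced probability measure on the leaves {0,1}^h. For a node σ and m ≥ 1 with |σ| + m ≤ h, let θ_{σ,m} be the probability measure on {0,1}^m given by θ_{σ,m}(η) = θ(ση)/θ(σ) (when θ(σ) > 0). Then (1/h) H(∂θ) = E_{σ∼θ}[(1/m) H(θ_{σ,m})] + O(m/h), where the expectation is over a node σ chosen by first picking a uniform level 0 ≤ i ≤ h and then a level-i node with probability θ(σ). -/
/-- Shannon entropy of a weight function on `{0,1}^n`. -/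
noncomputable def entShannon {n : ℕ} (p : (Fin n → Bool) → ℝ) : ℝ :=
  ∑ η : Fin n → Bool, Real.negMulLog (p η)

open Classical in
/-- The term `(1/m) H(θ_{σ,m})` for a node `σ` at level `k`, set to `0` when
`k + m > h` or `θ(σ) = 0`. -/
noncomputable def condTerm (h m : ℕ) (θ : (k : ℕ) → (Fin k → Bool) → ℝ)
    (k : ℕ) (σ : Fin k → Bool) : ℝ :=
  if k + m ≤ h ∧ θ k σ ≠ 0 then
    (1 / (m : ℝ)) * entShannon (fun η : Fin m → Bool =>
      θ (k + m) (Fin.append σ η) / θ k σ)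
  else 0

open Real

lemma sum_snoc_bool (n : ℕ) (f : (Fin (n+1) → Bool) → ℝ) :
    ∑ τ : Fin (n+1) → Bool, f τ
      = ∑ σ : Fin n → Bool, (f (Fin.snoc σ false) + f (Fin.snoc σ true)) := by
  rw [← Equiv.sum_comp (Fin.snocEquiv (fun _ => Bool)) f, Fintype.sum_prod_type,
    Fintype.sum_bool, ← Finset.sum_add_distrib]
  apply Finset.sum_congr rfl
  intro σ _
  simp [Fin.snocEquiv, add_comm]

lemma sum_append_bool (k m : ℕ) (f : (Fin (k+m) → Bool) → ℝ) :
    ∑ τ : Fin (k+m) → Bool, f τ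
      = ∑ σ : Fin k → Bool, ∑ η : Fin m → Bool, f (Fin.append σ η) := by
  rw [← Equiv.sum_comp (Fin.appendEquiv k m) f, Fintype.sum_prod_type]
  rfl

lemma negMulLog_two_point_left {a b : ℝ} (ha : 0 ≤ a) (hb : 0 ≤ b) :
    Real.negMulLog (a + b) ≤ Real.negMulLog a + Real.negMulLog b := by
  have key : ∀ x y : ℝ, 0 ≤ x → 0 ≤ y → -(x * Real.log (x + y)) ≤ Real.negMulLog x := by
    intro x y hx hy
    rcases eq_or_lt_of_le hx with rfl | hx'
    · simp [Real.negMulLog]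
    · have : Real.log x ≤ Real.log (x + y) := Real.log_le_log hx' (by linarith)
      have := mul_le_mul_of_nonneg_left this hx
      simp only [Real.negMulLog, neg_mul]
      linarith
  have h1 := key a b ha hb
  have h2 := key b a hb ha
  have : Real.negMulLog (a + b) = -(a * Real.log (a+b)) + -(b * Real.log (a+b)) := by
    simp only [Real.negMulLog, neg_mul]; ring
  rw [add_comm b a] at h2
  linarith

lemma negMulLog_two_point_right {a b : ℝ} (ha : 0 ≤ a) (hb : 0 ≤ b) :
    Real.negMulLog a + Real.negMulLog b ≤ Real.negMulLog (a + b) + (a + b) * Real.log 2 := by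
  rcases eq_or_lt_of_le (by linarith : (0:ℝ) ≤ a + b) with h0 | hpos
  · have ha0 : a = 0 := by linarith
    have hb0 : b = 0 := by linarith
    simp [ha0, hb0]
  · have hcc := Real.concaveOn_negMulLog.2 (Set.mem_Ici.mpr ha) (Set.mem_Ici.mpr hb)
      (by norm_num : (0:ℝ) ≤ 1/2) (by norm_num : (0:ℝ) ≤ 1/2) (by norm_num)
    have hmid : Real.negMulLog ((1/2:ℝ) • a + (1/2:ℝ) • b)
        = (1/2) * (Real.negMulLog (a+b) + (a+b) * Real.log 2) := by
      have : (1/2:ℝ) • a + (1/2:ℝ) • b = (a+b)/2 := by simp [smul_eq_mul]; ring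
      rw [this]
      have hlog : Real.log ((a+b)/2) = Real.log (a+b) - Real.log 2 :=
        Real.log_div (by linarith) (by norm_num)
      simp only [Real.negMulLog, neg_mul, hlog]
      ring
    simp only [smul_eq_mul] at hcc hmid
    rw [hmid] at hcc
    linarith

section Tree

variable (h : ℕ) (θ : (k : ℕ) → (Fin k → Bool) → ℝ)
variable (hb : ∀ k, k ≤ h → ∀ σ : Fin k → Bool, 0 ≤ θ k σ ∧ θ k σ ≤ 1)
variable (hroot : ∀ σ : Fin 0 → Bool, θ 0 σ = 1)
variable (hsplit : ∀ k, k < h → ∀ σ : Fin k → Bool,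
    θ k σ = θ (k + 1) (Fin.snoc σ false) + θ (k + 1) (Fin.snoc σ true))

include hsplit in
lemma descend_sum : ∀ j k, k + j ≤ h → ∀ σ : Fin k → Bool,
    ∑ η : Fin j → Bool, θ (k + j) (Fin.append σ η) = θ k σ := by
  intro j
  induction j with
  | zero =>
    intro k hk σ
    have huniq : ∀ η : Fin 0 → Bool, Fin.append σ η = σ ∘ Fin.cast (Nat.add_zero _) := by
      intro η
      have : η = Fin.elim0 := funext fun i => i.elim0
      rw [this, Fin.append_elim0]
    rw [Finset.sum_congr rfl (fun η _ => by rw [huniq η])]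
    simp
  | succ j ih =>
    intro k hk σ
    rw [sum_snoc_bool j (fun η => θ (k + (j+1)) (Fin.append σ η))]
    have heq : ∀ (η : Fin j → Bool) (b : Bool),
        θ (k + (j+1)) (Fin.append σ (Fin.snoc η b)) = θ (k + j + 1) (Fin.snoc (Fin.append σ η) b) := by
      intro η b
      rw [Fin.append_snoc]
      rfl
    calc ∑ η : Fin j → Bool,
          (θ (k + (j+1)) (Fin.append σ (Fin.snoc η false)) + θ (k + (j+1)) (Fin.append σ (Fin.snoc η true)))
        = ∑ η : Fin j → Bool, θ (k + j) (Fin.append σ η) := by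
          apply Finset.sum_congr rfl
          intro η _
          rw [heq, heq, ← hsplit (k + j) (by omega) (Fin.append σ η)]
      _ = θ k σ := ih k (by omega) σ

include hroot hsplit in
lemma total_mass : ∀ k, k ≤ h → ∑ σ : Fin k → Bool, θ k σ = 1 := by
  intro k
  induction k with
  | zero =>
    intro _
    rw [Fintype.sum_unique]
    exact hroot _
  | succ k ih =>
    intro hk
    rw [sum_snoc_bool k (θ (k+1))]
    calc ∑ σ : Fin k → Bool, (θ (k+1) (Fin.snoc σ false) + θ (k+1) (Fin.snoc σ true))
        = ∑ σ : Fin k → Bool, θ k σ :=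
          Finset.sum_congr rfl (fun σ _ => (hsplit k (by omega) σ).symm)
      _ = 1 := ih (by omega)

end Tree

section Tree2

variable (h : ℕ) (θ : (k : ℕ) → (Fin k → Bool) → ℝ)
variable (hb : ∀ k, k ≤ h → ∀ σ : Fin k → Bool, 0 ≤ θ k σ ∧ θ k σ ≤ 1)
variable (hroot : ∀ σ : Fin 0 → Bool, θ 0 σ = 1)
variable (hsplit : ∀ k, k < h → ∀ σ : Fin k → Bool,
    θ k σ = θ (k + 1) (Fin.snoc σ false) + θ (k + 1) (Fin.snoc σ true))

include hb hroot hsplit in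
lemma ent_step : ∀ k, k < h →
    entShannon (θ k) ≤ entShannon (θ (k+1)) ∧
    entShannon (θ (k+1)) ≤ entShannon (θ k) + Real.log 2 := by
  intro k hk
  have hE1 : entShannon (θ (k+1))
      = ∑ σ : Fin k → Bool,
          (Real.negMulLog (θ (k+1) (Fin.snoc σ false)) + Real.negMulLog (θ (k+1) (Fin.snoc σ true))) :=
    sum_snoc_bool k (fun τ => Real.negMulLog (θ (k+1) τ))
  have hE0 : entShannon (θ k) = ∑ σ : Fin k → Bool, Real.negMulLog (θ k σ) := rfl
  have hnn : ∀ σ : Fin k → Bool, 0 ≤ θ (k+1) (Fin.snoc σ false) ∧ 0 ≤ θ (k+1) (Fin.snoc σ true) :=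
    fun σ => ⟨(hb (k+1) (by omega) _).1, (hb (k+1) (by omega) _).1⟩
  constructor
  · rw [hE0, hE1]
    apply Finset.sum_le_sum
    intro σ _
    rw [hsplit k hk σ]
    exact negMulLog_two_point_left (hnn σ).1 (hnn σ).2
  · rw [hE0, hE1]
    have := total_mass h θ hroot hsplit k (le_of_lt hk)
    calc ∑ σ : Fin k → Bool,
          (Real.negMulLog (θ (k+1) (Fin.snoc σ false)) + Real.negMulLog (θ (k+1) (Fin.snoc σ true)))
        ≤ ∑ σ : Fin k → Bool, (Real.negMulLog (θ k σ) + θ k σ * Real.log 2) := by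
          apply Finset.sum_le_sum
          intro σ _
          have := negMulLog_two_point_right (hnn σ).1 (hnn σ).2
          rw [← hsplit k hk σ] at this
          exact this
      _ = (∑ σ : Fin k → Bool, Real.negMulLog (θ k σ)) + (∑ σ : Fin k → Bool, θ k σ) * Real.log 2 := by
          rw [Finset.sum_add_distrib, Finset.sum_mul]
      _ = (∑ σ : Fin k → Bool, Real.negMulLog (θ k σ)) + Real.log 2 := by rw [this, one_mul]

include hb hroot hsplit in
lemma ent_mono : ∀ j d, j + d ≤ h →
    entShannon (θ j) ≤ entShannon (θ (j + d)) ∧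
    entShannon (θ (j + d)) ≤ entShannon (θ j) + d * Real.log 2 := by
  intro j d
  induction d with
  | zero => intro _; simp
  | succ d ih =>
    intro hjd
    obtain ⟨ih1, ih2⟩ := ih (by omega)
    obtain ⟨s1, s2⟩ := ent_step h θ hb hroot hsplit (j + d) (by omega)
    have hlog2 : (0:ℝ) ≤ Real.log 2 := Real.log_nonneg (by norm_num)
    constructor
    · exact le_trans ih1 s1
    · have : ((d:ℝ) + 1) * Real.log 2 = d * Real.log 2 + Real.log 2 := by ring
      push_cast
      rw [this]
      calc entShannon (θ (j + d + 1)) ≤ entShannon (θ (j + d)) + Real.log 2 := s2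
        _ ≤ entShannon (θ j) + d * Real.log 2 + Real.log 2 := by linarith
        _ = entShannon (θ j) + (d * Real.log 2 + Real.log 2) := by ring

include hroot in
lemma ent_zero : entShannon (θ 0) = 0 := by
  unfold entShannon
  rw [Fintype.sum_unique, hroot, Real.negMulLog_one]

end Tree2

section Tree3

variable (h : ℕ) (θ : (k : ℕ) → (Fin k → Bool) → ℝ)
variable (hb : ∀ k, k ≤ h → ∀ σ : Fin k → Bool, 0 ≤ θ k σ ∧ θ k σ ≤ 1)
variable (hsplit : ∀ k, k < h → ∀ σ : Fin k → Bool,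
    θ k σ = θ (k + 1) (Fin.snoc σ false) + θ (k + 1) (Fin.snoc σ true))

include hb hsplit in
lemma chain_rule (m : ℕ) : ∀ k, k + m ≤ h →
    ∑ σ : Fin k → Bool, θ k σ * condTerm h m θ k σ
      = (1/(m:ℝ)) * (entShannon (θ (k+m)) - entShannon (θ k)) := by
  intro k hk
  have hAm : entShannon (θ (k+m))
      = ∑ σ : Fin k → Bool, ∑ η : Fin m → Bool, Real.negMulLog (θ (k+m) (Fin.append σ η)) :=
    sum_append_bool k m (fun τ => Real.negMulLog (θ (k+m) τ))
  have hpt : ∀ σ : Fin k → Bool,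
      θ k σ * condTerm h m θ k σ
        = (1/(m:ℝ)) * ((∑ η : Fin m → Bool, Real.negMulLog (θ (k+m) (Fin.append σ η)))
            - Real.negMulLog (θ k σ)) := by
    intro σ
    have hdsum : ∑ η : Fin m → Bool, θ (k+m) (Fin.append σ η) = θ k σ :=
      descend_sum h θ hsplit m k hk σ
    have hdnn : ∀ η : Fin m → Bool, 0 ≤ θ (k+m) (Fin.append σ η) :=
      fun η => (hb (k+m) hk _).1
    by_cases hz : θ k σ = 0
    · have hdz : ∀ η : Fin m → Bool, θ (k+m) (Fin.append σ η) = 0 := by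
        intro η
        have := (Finset.sum_eq_zero_iff_of_nonneg (fun η _ => hdnn η)).mp (by rw [hdsum, hz])
        exact this η (Finset.mem_univ η)
      have : condTerm h m θ k σ = 0 := by
        unfold condTerm
        rw [if_neg]
        simp [hz]
      rw [this, hz]
      simp [hdz, hz]
    · have hspos : 0 < θ k σ := lt_of_le_of_ne (hb k (by omega) σ).1 (Ne.symm hz)
      have hct : condTerm h m θ k σ
          = (1 / (m : ℝ)) * ∑ η : Fin m → Bool,
              Real.negMulLog (θ (k + m) (Fin.append σ η) / θ k σ) := by
        unfold condTerm
        rw [if_pos ⟨hk, hz⟩]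
        rfl
      rw [hct]
      have hper : ∀ η : Fin m → Bool,
          θ k σ * Real.negMulLog (θ (k+m) (Fin.append σ η) / θ k σ)
            = Real.negMulLog (θ (k+m) (Fin.append σ η))
              - (θ (k+m) (Fin.append σ η) / θ k σ) * Real.negMulLog (θ k σ) := by
        intro η
        have hmul := Real.negMulLog_mul (θ k σ) (θ (k+m) (Fin.append σ η) / θ k σ)
        rw [mul_div_cancel₀ _ hz] at hmul
        linarith
      calc θ k σ * ((1 / (m : ℝ)) * ∑ η : Fin m → Bool,
              Real.negMulLog (θ (k + m) (Fin.append σ η) / θ k σ))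
          = (1/(m:ℝ)) * ∑ η : Fin m → Bool,
              θ k σ * Real.negMulLog (θ (k + m) (Fin.append σ η) / θ k σ) := by
            simp only [Finset.mul_sum]
            apply Finset.sum_congr rfl
            intro η _
            ring
        _ = (1/(m:ℝ)) * ∑ η : Fin m → Bool,
              (Real.negMulLog (θ (k+m) (Fin.append σ η))
                - (θ (k+m) (Fin.append σ η) / θ k σ) * Real.negMulLog (θ k σ)) := by
            rw [Finset.sum_congr rfl (fun η _ => hper η)]
        _ = (1/(m:ℝ)) * ((∑ η : Fin m → Bool, Real.negMulLog (θ (k+m) (Fin.append σ η)))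
              - Real.negMulLog (θ k σ)) := by
            rw [Finset.sum_sub_distrib]
            congr 2
            rw [← Finset.sum_mul, ← Finset.sum_div, hdsum, div_self hz, one_mul]
  rw [Finset.sum_congr rfl (fun σ _ => hpt σ), ← Finset.mul_sum, Finset.sum_sub_distrib,
    hAm]
  rfl

end Tree3


set_option maxHeartbeats 1000000 in
/-- Entropy of the leaf measure equals the average of normalized conditional
entropies `m` generations down, up to an error `O(m/h)`:
`(1/h) H(∂θ) = E_{σ∼θ}[(1/m) H(θ_{σ,m})] + O(m/h)`. -/
theorem entropy_average_over_levels :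
    ∃ C : ℝ, 0 < C ∧ ∀ (h m : ℕ), 1 ≤ m → 1 ≤ h →
      ∀ θ : (k : ℕ) → (Fin k → Bool) → ℝ,
        (∀ k, k ≤ h → ∀ σ : Fin k → Bool, 0 ≤ θ k σ ∧ θ k σ ≤ 1) →
        (∀ σ : Fin 0 → Bool, θ 0 σ = 1) →
        (∀ k, k < h → ∀ σ : Fin k → Bool,
          θ k σ = θ (k + 1) (Fin.snoc σ false) + θ (k + 1) (Fin.snoc σ true)) →
        |(1 / (h : ℝ)) * entShannon (θ h) -
            (1 / ((h : ℝ) + 1)) * ∑ k ∈ Finset.range (h + 1),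
              ∑ σ : Fin k → Bool, θ k σ * condTerm h m θ k σ| ≤
          C * m / h := by
  refine ⟨3, by norm_num, ?_⟩
  intro h m hm hh θ hb hroot hsplit
  have hlog2nn : (0:ℝ) ≤ Real.log 2 := Real.log_nonneg (by norm_num)
  have hlog2le : Real.log 2 ≤ 1 := by
    have := Real.log_le_sub_one_of_pos (by norm_num : (0:ℝ) < 2)
    linarith
  have hhr : (1:ℝ) ≤ (h:ℝ) := by exact_mod_cast hh
  have hmr : (1:ℝ) ≤ (m:ℝ) := by exact_mod_cast hm
  have hhpos : (0:ℝ) < (h:ℝ) := by linarith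
  have hh1pos : (0:ℝ) < (h:ℝ) + 1 := by linarith
  -- entropy bounds
  have hHle : ∀ j, j ≤ h → entShannon (θ j) ≤ j * Real.log 2 := by
    intro j hj
    have := (ent_mono h θ hb hroot hsplit 0 j (by omega)).2
    rw [Nat.zero_add] at this
    rw [ent_zero θ hroot] at this
    linarith
  have hHmono : ∀ j, j ≤ h → entShannon (θ j) ≤ entShannon (θ h) ∧
      entShannon (θ h) ≤ entShannon (θ j) + (h - j : ℕ) * Real.log 2 := by
    intro j hj
    have := ent_mono h θ hb hroot hsplit j (h - j) (by omega)
    rw [(by omega : j + (h - j) = h)] at this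
    exact this
  have hHnn : ∀ j, j ≤ h → 0 ≤ entShannon (θ j) := by
    intro j hj
    have := (ent_mono h θ hb hroot hsplit 0 j (by omega)).1
    rw [Nat.zero_add, ent_zero θ hroot] at this
    exact this
  have hHh_le : entShannon (θ h) ≤ (h:ℝ) := by
    have := hHle h le_rfl
    have h2 : (h:ℝ) * Real.log 2 ≤ (h:ℝ) * 1 := by
      apply mul_le_mul_of_nonneg_left hlog2le (by positivity)
    linarith
  have hzero_inner : ∀ k, ¬(k + m ≤ h) →
      ∑ σ : Fin k → Bool, θ k σ * condTerm h m θ k σ = 0 := by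
    intro k hk
    apply Finset.sum_eq_zero
    intro σ _
    have : condTerm h m θ k σ = 0 := by
      unfold condTerm
      rw [if_neg (fun hc => hk hc.1)]
    rw [this, mul_zero]
  by_cases hmh : m ≤ h
  · -- main case
    set Hj : ℕ → ℝ := fun j => entShannon (θ j) with hHj
    set S : ℝ := ∑ k ∈ Finset.range (h + 1),
        ∑ σ : Fin k → Bool, θ k σ * condTerm h m θ k σ with hSdef
    have hn : h - m + 1 ≤ h + 1 := by omega
    have hstep1 : S = ∑ k ∈ Finset.range (h - m + 1),
        ∑ σ : Fin k → Bool, θ k σ * condTerm h m θ k σ := by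
      rw [hSdef]
      symm
      apply Finset.sum_subset
      · intro k hk
        simp only [Finset.mem_range] at *
        omega
      · intro k hk1 hk2
        simp only [Finset.mem_range] at hk1 hk2
        exact hzero_inner k (by omega)
    have hstep2 : S = (1/(m:ℝ)) *
        ((∑ k ∈ Finset.range (h - m + 1), Hj (k + m))
          - ∑ k ∈ Finset.range (h - m + 1), Hj k) := by
      rw [hstep1, ← Finset.sum_sub_distrib, Finset.mul_sum]
      apply Finset.sum_congr rfl
      intro k hk
      simp only [Finset.mem_range] at hk
      rw [chain_rule h θ hb hsplit m k (by omega)]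
    have hA : ∑ k ∈ Finset.range (h - m + 1), Hj (k + m)
        = ∑ j ∈ Finset.Ico m (h + 1), Hj j := by
      rw [Finset.sum_Ico_eq_sum_range]
      rw [(by omega : h + 1 - m = h - m + 1)]
      exact Finset.sum_congr rfl (fun k _ => by rw [Nat.add_comm])
    have hsplit1 : ∑ j ∈ Finset.Ico m (h+1), Hj j
        = (∑ j ∈ Finset.range (h+1), Hj j) - ∑ j ∈ Finset.range m, Hj j := by
      simp only [Finset.range_eq_Ico]
      rw [← Finset.sum_Ico_consecutive _ (by omega : 0 ≤ m) (by omega : m ≤ h+1)]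
      ring
    have hsplit2 : ∑ j ∈ Finset.range (h - m + 1), Hj j
        = (∑ j ∈ Finset.range (h+1), Hj j) - ∑ j ∈ Finset.Ico (h - m + 1) (h+1), Hj j := by
      simp only [Finset.range_eq_Ico]
      rw [← Finset.sum_Ico_consecutive _ (by omega : 0 ≤ h - m + 1) (by omega : h - m + 1 ≤ h+1)]
      ring
    have hS2 : S = (1/(m:ℝ)) *
        ((∑ j ∈ Finset.Ico (h - m + 1) (h+1), Hj j) - ∑ j ∈ Finset.range m, Hj j) := by
      rw [hstep2, hA, hsplit1, hsplit2]
      ring_nf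
    -- bounds on the two boundary sums
    have hcard : (Finset.Ico (h - m + 1) (h+1)).card = m := by
      rw [Nat.card_Ico]; omega
    have hPub : ∑ j ∈ Finset.Ico (h - m + 1) (h+1), Hj j ≤ (m:ℝ) * Hj h := by
      calc ∑ j ∈ Finset.Ico (h - m + 1) (h+1), Hj j
          ≤ ∑ j ∈ Finset.Ico (h - m + 1) (h+1), Hj h := by
            apply Finset.sum_le_sum
            intro j hj
            simp only [Finset.mem_Ico] at hj
            exact (hHmono j (by omega)).1
        _ = (m:ℝ) * Hj h := by
            rw [Finset.sum_const, hcard, nsmul_eq_mul]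
    have hPlb : (m:ℝ) * Hj h - (m:ℝ) * ((m:ℝ) * Real.log 2)
        ≤ ∑ j ∈ Finset.Ico (h - m + 1) (h+1), Hj j := by
      calc (m:ℝ) * Hj h - (m:ℝ) * ((m:ℝ) * Real.log 2)
          = ∑ j ∈ Finset.Ico (h - m + 1) (h+1), (Hj h - (m:ℝ) * Real.log 2) := by
            rw [Finset.sum_const, hcard, nsmul_eq_mul]; ring
        _ ≤ ∑ j ∈ Finset.Ico (h - m + 1) (h+1), Hj j := by
            apply Finset.sum_le_sum
            intro j hj
            simp only [Finset.mem_Ico] at hj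
            have h1 := (hHmono j (by omega)).2
            have h2 : ((h - j : ℕ) : ℝ) ≤ (m:ℝ) := by
              have : h - j ≤ m := by omega
              exact_mod_cast this
            have h3 : ((h - j : ℕ) : ℝ) * Real.log 2 ≤ (m:ℝ) * Real.log 2 :=
              mul_le_mul_of_nonneg_right h2 hlog2nn
            linarith
    have hQub : ∑ j ∈ Finset.range m, Hj j ≤ (m:ℝ) * ((m:ℝ) * Real.log 2) := by
      calc ∑ j ∈ Finset.range m, Hj j
          ≤ ∑ j ∈ Finset.range m, (m:ℝ) * Real.log 2 := by
            apply Finset.sum_le_sum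
            intro j hj
            simp only [Finset.mem_range] at hj
            have h1 := hHle j (by omega)
            have h2 : ((j:ℝ)) * Real.log 2 ≤ (m:ℝ) * Real.log 2 := by
              apply mul_le_mul_of_nonneg_right _ hlog2nn
              exact_mod_cast le_of_lt hj
            linarith
        _ = (m:ℝ) * ((m:ℝ) * Real.log 2) := by
            rw [Finset.sum_const, Finset.card_range, nsmul_eq_mul]
    have hQlb : 0 ≤ ∑ j ∈ Finset.range m, Hj j := by
      apply Finset.sum_nonneg
      intro j hj
      simp only [Finset.mem_range] at hj
      exact hHnn j (by omega)
    -- |S - Hj h| ≤ 2 m log 2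
    have hmpos : (0:ℝ) < (m:ℝ) := by linarith
    have hE : |S - Hj h| ≤ 2 * (m:ℝ) * Real.log 2 := by
      rw [abs_le]
      constructor
      · rw [hS2]
        have key : (1/(m:ℝ)) * (((m:ℝ) * Hj h - (m:ℝ) * ((m:ℝ) * Real.log 2))
            - (m:ℝ) * ((m:ℝ) * Real.log 2)) ≤ (1/(m:ℝ)) *
            ((∑ j ∈ Finset.Ico (h - m + 1) (h+1), Hj j) - ∑ j ∈ Finset.range m, Hj j) := by
          apply mul_le_mul_of_nonneg_left _ (by positivity)
          linarith
        have expand : (1/(m:ℝ)) * (((m:ℝ) * Hj h - (m:ℝ) * ((m:ℝ) * Real.log 2))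
            - (m:ℝ) * ((m:ℝ) * Real.log 2)) = Hj h - 2 * (m:ℝ) * Real.log 2 := by
          field_simp
          ring
        linarith
      · rw [hS2]
        have key : (1/(m:ℝ)) *
            ((∑ j ∈ Finset.Ico (h - m + 1) (h+1), Hj j) - ∑ j ∈ Finset.range m, Hj j)
            ≤ (1/(m:ℝ)) * ((m:ℝ) * Hj h) := by
          apply mul_le_mul_of_nonneg_left _ (by positivity)
          linarith
        have expand : (1/(m:ℝ)) * ((m:ℝ) * Hj h) = Hj h := by
          field_simp
        have : 0 ≤ 2 * (m:ℝ) * Real.log 2 := by positivity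
        linarith
    -- final arithmetic
    have hEb : |S - Hj h| ≤ 2 * (m:ℝ) := by
      have : 2 * (m:ℝ) * Real.log 2 ≤ 2 * (m:ℝ) * 1 := by
        apply mul_le_mul_of_nonneg_left hlog2le (by positivity)
      linarith
    have hrw : (1 / (h : ℝ)) * entShannon (θ h) - (1 / ((h : ℝ) + 1)) * S
        = Hj h / ((h:ℝ) * ((h:ℝ)+1)) - (S - Hj h) / ((h:ℝ)+1) := by
      rw [hHj]
      field_simp
      ring
    rw [hrw]
    have hHjnn : 0 ≤ Hj h := hHnn h le_rfl
    have hHjle : Hj h ≤ (h:ℝ) := hHh_le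
    clear_value S Hj
    have habs : |Hj h / ((h:ℝ) * ((h:ℝ)+1)) - (S - Hj h) / ((h:ℝ)+1)|
        ≤ Hj h / ((h:ℝ) * ((h:ℝ)+1)) + |S - Hj h| / ((h:ℝ)+1) := by
      calc |Hj h / ((h:ℝ) * ((h:ℝ)+1)) - (S - Hj h) / ((h:ℝ)+1)|
          ≤ |Hj h / ((h:ℝ) * ((h:ℝ)+1))| + |(S - Hj h) / ((h:ℝ)+1)| := abs_sub _ _
        _ = Hj h / ((h:ℝ) * ((h:ℝ)+1)) + |S - Hj h| / ((h:ℝ)+1) := by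
            rw [abs_of_nonneg (div_nonneg hHjnn (by positivity : (0:ℝ) ≤ (h:ℝ)*((h:ℝ)+1))),
              abs_div, abs_of_pos hh1pos]
    have t1 : Hj h / ((h:ℝ) * ((h:ℝ)+1)) ≤ (m:ℝ) / (h:ℝ) := by
      rw [div_le_div_iff₀ (by positivity) hhpos]
      have c1 : Hj h * (h:ℝ) ≤ (h:ℝ) * (h:ℝ) := mul_le_mul_of_nonneg_right hHjle hhpos.le
      have c2 : (h:ℝ) * (h:ℝ) ≤ (h:ℝ) * ((h:ℝ)+1) := by nlinarith
      have c3 : (h:ℝ) * ((h:ℝ)+1) ≤ (m:ℝ) * ((h:ℝ) * ((h:ℝ)+1)) := by nlinarith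
      linarith
    have t2 : |S - Hj h| / ((h:ℝ)+1) ≤ 2 * (m:ℝ) / (h:ℝ) := by
      rw [div_le_div_iff₀ hh1pos hhpos]
      have c := mul_le_mul_of_nonneg_right hEb hhpos.le
      have : (0:ℝ) ≤ 2 * (m:ℝ) := by linarith
      linarith
    have : (3:ℝ) * (m:ℝ) / (h:ℝ) = (m:ℝ)/(h:ℝ) + 2*(m:ℝ)/(h:ℝ) := by ring
    rw [this]
    linarith
  · -- degenerate case m > h
    have hS0 : ∑ k ∈ Finset.range (h + 1),
        ∑ σ : Fin k → Bool, θ k σ * condTerm h m θ k σ = 0 := by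
      apply Finset.sum_eq_zero
      intro k hk
      exact hzero_inner k (by omega)
    rw [hS0, mul_zero, sub_zero]
    have hnn : 0 ≤ (1 / (h : ℝ)) * entShannon (θ h) := by
      apply mul_nonneg (by positivity)
      have := (ent_mono h θ hb hroot hsplit 0 h (by omega)).1
      rw [Nat.zero_add, ent_zero θ hroot] at this
      exact this
    rw [abs_of_nonneg hnn]
    have hub : (1 / (h : ℝ)) * entShannon (θ h) ≤ 1 := by
      have h1 : entShannon (θ h) ≤ (h:ℝ) := hHh_le
      rw [div_mul_eq_mul_div, one_mul, div_le_one hhpos]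
      exact h1
    have hmgt : (h:ℝ) < (m:ℝ) := by exact_mod_cast Nat.lt_of_not_le hmh
    have : (1:ℝ) ≤ 3 * (m:ℝ) / (h:ℝ) := by
      rw [le_div_iff₀ hhpos]
      nlinarith
    linarith
end

section
/- Let μ^{(n)} = |Λ|^{−n} Σ_{i∈Λ^n} δ_{f_i(0)} for an IFS with common ratio 0 < r < 1 and 0 ∈ X ⊆ [0,1), and set s_n = H(μ^{(n)}, I_{r^n}), the Shannon entropy with respect to the partition into intervals of length r^n. Then there is a constant C with s_{m+n} ≥ s_m + s_n − C for all m, n, and hence the limit α = lim_n s_n/(n log(1/r)) exists. -/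
open Set Filter MeasureTheory

/-- Composition `f_{i_1} ∘ ⋯ ∘ f_{i_n}` of the maps along a finite word. -/
def wordComp {Λ : Type*} (f : Λ → ℝ → ℝ) : (n : ℕ) → (Fin n → Λ) → ℝ → ℝ
  | 0, _, x => x
  | n + 1, i, x => f (i 0) (wordComp f n (fun k => i k.succ) x)

/-- `μ⁽ⁿ⁾ = |Λ|^{−n} Σ_{i∈Λⁿ} δ_{f_i(0)}`. -/
noncomputable def μiter {Λ : Type*} [Fintype Λ] (f : Λ → ℝ → ℝ) (n : ℕ) :
    Measure ℝ :=
  ((Fintype.card Λ : ENNReal) ^ n)⁻¹ •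
    ∑ i : Fin n → Λ, Measure.dirac (wordComp f n i 0)

/-- The entropy of `ν` with respect to the partition `I_ε` of `ℝ` into
intervals `[kε, (k+1)ε)`. -/
noncomputable def entI (ν : Measure ℝ) (ε : ℝ) : ℝ :=
  ∑' k : ℤ, Real.negMulLog ((ν (Set.Ico ((k : ℝ) * ε) (((k : ℝ) + 1) * ε))).toReal)

/-!
Split a word of length `m + n` into a pair `(i, j)` of words of lengths `m` and `n`, so that
`f_{ij}(0) = f_i(0) + r^m f_j(0)` with `f_j(0) ∈ [0, 1)`. The `r^{m+n}`-cell of `f_{ij}(0)`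
determines the `r^m`-cell of `f_i(0)` up to 3 choices, and together with `i` it determines the
`r^n`-cell of `f_j(0)` up to 2 choices. As `i` and `j` are independent under the uniform measure
on pairs, counting fibres and Gibbs' inequality give `s_m + s_n ≤ s_{m+n} + log 6`. Then
`log 6 - s_n` is subadditive and, since `s_n ≤ n log |Λ|`, Fekete's lemma gives the limit.
-/

open Finset Real

section UniformEntropy

variable {Ω : Type*} [Fintype Ω] {β : Type*} [DecidableEq β]

noncomputable def uniformEntropy (g : Ω → β) : ℝ :=
  (Fintype.card Ω : ℝ)⁻¹ * ∑ ω, log (Fintype.card Ω / #{ω' | g ω' = g ω})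

lemma card_fiber_pos (g : Ω → β) (ω : Ω) : 0 < #{ω' | g ω' = g ω} :=
  card_pos.2 ⟨ω, by simp⟩

lemma uniformEntropy_eq_sum_negMulLog (g : Ω → β) :
    uniformEntropy g =
      ∑ b ∈ univ.image g, negMulLog (#{ω | g ω = b} / Fintype.card Ω) := by
  rw [uniformEntropy, mul_sum]
  refine (sum_image' _ fun ω _ => ?_).symm
  rw [sum_congr rfl fun ω' hω' => by rw [(mem_filter.1 hω').2], sum_const, nsmul_eq_mul,
    negMulLog, neg_mul, ← mul_neg, ← log_inv, inv_div]
  ring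

lemma uniformEntropy_le_log_card (g : Ω → β) : uniformEntropy g ≤ log (Fintype.card Ω) := by
  rcases isEmpty_or_nonempty Ω with hΩ | hΩ
  · simp [uniformEntropy]
  have hN : (0 : ℝ) < Fintype.card Ω := by exact_mod_cast Fintype.card_pos
  calc uniformEntropy g ≤ (Fintype.card Ω : ℝ)⁻¹ * ∑ _ω : Ω, log (Fintype.card Ω) := by
        refine mul_le_mul_of_nonneg_left (sum_le_sum fun ω _ => ?_) (by positivity)
        have : (1 : ℝ) ≤ #{ω' | g ω' = g ω} := by exact_mod_cast card_fiber_pos g ω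
        exact log_le_log (by positivity) (div_le_self hN.le this)
    _ = log (Fintype.card Ω) := by
        rw [sum_const, card_univ, nsmul_eq_mul, inv_mul_cancel_left₀ hN.ne']

lemma uniformEntropy_comp_equiv {Ω' : Type*} [Fintype Ω'] (e : Ω' ≃ Ω) (g : Ω → β) :
    uniformEntropy (fun ω => g (e ω)) = uniformEntropy g := by
  have hfiber : ∀ ω, #{ω' | g (e ω') = g (e ω)} = #{x | g x = g (e ω)} := fun ω =>
    card_equiv e fun ω' => by simp
  simp only [uniformEntropy, hfiber, Fintype.card_congr e]
  congr 1
  exact Fintype.sum_equiv e _ _ fun _ => rfl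

lemma sum_inv_card_fiber_le (g : Ω → β) {s : Finset Ω} {T : Finset β}
    (h : ∀ ω ∈ s, g ω ∈ T) :
    ∑ ω ∈ s, (#{ω' | g ω' = g ω} : ℝ)⁻¹ ≤ #T := by
  rw [← sum_fiberwise_of_maps_to h]
  calc ∑ b ∈ T, ∑ ω ∈ s with g ω = b, (#{ω' | g ω' = g ω} : ℝ)⁻¹
      = ∑ b ∈ T, (#{ω ∈ s | g ω = b} : ℝ) / #{ω' | g ω' = b} := by
        refine sum_congr rfl fun b _ => ?_
        rw [sum_congr rfl fun ω hω => by rw [(mem_filter.1 hω).2], sum_const, nsmul_eq_mul,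
          div_eq_mul_inv]
    _ ≤ ∑ _b ∈ T, (1 : ℝ) := by
        refine sum_le_sum fun b _ => div_le_one_of_le₀ ?_ (by positivity)
        exact_mod_cast Finset.card_le_card (filter_subset_filter _ (subset_univ s))
    _ = #T := by simp

lemma sum_log_le_of_sum_le (x : Ω → ℝ) (hx : ∀ ω, 0 < x ω) {M : ℝ} (hM : 0 < M)
    (h : ∑ ω, x ω ≤ M * Fintype.card Ω) :
    ∑ ω, log (x ω) ≤ Fintype.card Ω * log M := by
  have hpoint : ∀ ω, log (x ω) ≤ log M + (x ω / M - 1) := fun ω => by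
    have := log_le_sub_one_of_pos (div_pos (hx ω) hM)
    rwa [log_div (hx ω).ne' hM.ne', sub_le_iff_le_add'] at this
  have hsum : ∑ ω, x ω / M ≤ Fintype.card Ω := by
    rw [← sum_div, div_le_iff₀ hM]; linarith
  calc ∑ ω, log (x ω) ≤ ∑ ω, (log M + (x ω / M - 1)) := sum_le_sum fun ω _ => hpoint ω
    _ ≤ Fintype.card Ω * log M := by
        simp only [sum_add_distrib, sum_sub_distrib, sum_const, card_univ, nsmul_eq_mul,
          mul_one]
        linarith

end UniformEntropy

section Product

variable {Ω₁ Ω₂ α β γ : Type*} [Fintype Ω₁] [Fintype Ω₂]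
  [DecidableEq α] [DecidableEq β] [DecidableEq γ]

lemma sum_inv_card_fiber_mul_le (A : Ω₁ → α) (B : Ω₂ → β) (C : Ω₁ × Ω₂ → γ) (c : γ)
    {T : Finset α} {L : ℕ} (hA : ∀ p, C p = c → A p.1 ∈ T)
    (hB : ∀ i, ∃ U : Finset β, #U ≤ L ∧ ∀ j, C (i, j) = c → B j ∈ U) :
    ∑ p with C p = c, ((#{i | A i = A p.1} : ℝ) * #{j | B j = B p.2})⁻¹ ≤ #T * L := by
  have hrow : ∀ i, ∑ j, (if C (i, j) = c then ((#{i' | A i' = A i} : ℝ) * #{j' | B j' = B j})⁻¹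
      else 0) ≤ if A i ∈ T then (#{i' | A i' = A i} : ℝ)⁻¹ * L else 0 := by
    intro i
    split_ifs with hi
    · obtain ⟨U, hUL, hU⟩ := hB i
      simp only [mul_inv, ← sum_filter, ← mul_sum]
      refine mul_le_mul_of_nonneg_left ?_ (by positivity)
      exact (sum_inv_card_fiber_le B fun j hj => hU j (mem_filter.1 hj).2).trans
        (by exact_mod_cast hUL)
    · exact (sum_eq_zero fun j _ => if_neg fun h => hi (hA _ h)).le
  calc ∑ p with C p = c, ((#{i | A i = A p.1} : ℝ) * #{j | B j = B p.2})⁻¹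
      ≤ ∑ i, if A i ∈ T then (#{i' | A i' = A i} : ℝ)⁻¹ * L else 0 := by
        rw [sum_filter, Fintype.sum_prod_type]
        exact sum_le_sum fun i _ => hrow i
    _ ≤ #T * L := by
        rw [← sum_filter, ← sum_mul]
        exact mul_le_mul_of_nonneg_right
          (sum_inv_card_fiber_le A fun i hi => (mem_filter.1 hi).2) (by positivity)

lemma sum_card_fiber_div_le (A : Ω₁ → α) (B : Ω₂ → β) (C : Ω₁ × Ω₂ → γ) {K L : ℕ}
    (hA : ∀ c, ∃ T : Finset α, #T ≤ K ∧ ∀ p, C p = c → A p.1 ∈ T)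
    (hB : ∀ i c, ∃ U : Finset β, #U ≤ L ∧ ∀ j, C (i, j) = c → B j ∈ U) :
    ∑ p, (#{q | C q = C p} : ℝ) / (#{i | A i = A p.1} * #{j | B j = B p.2}) ≤
      K * L * Fintype.card (Ω₁ × Ω₂) := by
  calc ∑ p, (#{q | C q = C p} : ℝ) / (#{i | A i = A p.1} * #{j | B j = B p.2})
      = ∑ q, ∑ p with C p = C q, ((#{i | A i = A p.1} : ℝ) * #{j | B j = B p.2})⁻¹ := by
        simp only [card_filter, Nat.cast_sum, Nat.cast_ite, Nat.cast_one, Nat.cast_zero,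
          div_eq_mul_inv, sum_mul, ite_mul, one_mul, zero_mul, sum_filter]
        rw [sum_comm]
        simp only [eq_comm]
    _ ≤ ∑ _q : Ω₁ × Ω₂, (K * L : ℝ) := by
        refine sum_le_sum fun q _ => ?_
        obtain ⟨T, hTK, hT⟩ := hA (C q)
        refine (sum_inv_card_fiber_mul_le A B C (C q) hT (hB · (C q))).trans ?_
        gcongr
    _ = K * L * Fintype.card (Ω₁ × Ω₂) := by simp [mul_comm]

lemma uniformEntropy_add_sub_eq [Nonempty Ω₁] [Nonempty Ω₂]
    (A : Ω₁ → α) (B : Ω₂ → β) (C : Ω₁ × Ω₂ → γ) :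
    uniformEntropy A + uniformEntropy B - uniformEntropy C =
      (Fintype.card (Ω₁ × Ω₂) : ℝ)⁻¹ *
        ∑ p, log (#{q | C q = C p} / (#{i | A i = A p.1} * #{j | B j = B p.2})) := by
  set N₁ : ℝ := (Fintype.card Ω₁ : ℝ)
  set N₂ : ℝ := (Fintype.card Ω₂ : ℝ)
  have hN₁ : 0 < N₁ := by simp [N₁, Fintype.card_pos]
  have hN₂ : 0 < N₂ := by simp [N₂, Fintype.card_pos]
  have hpoint : ∀ p : Ω₁ × Ω₂,
      log (#{q | C q = C p} / (#{i | A i = A p.1} * #{j | B j = B p.2})) =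
        (log (N₁ / #{i | A i = A p.1}) + log (N₂ / #{j | B j = B p.2})) -
          log (N₁ * N₂ / #{q | C q = C p}) := by
    intro p
    have ha : (0 : ℝ) < #{i | A i = A p.1} := by exact_mod_cast card_fiber_pos A p.1
    have hb : (0 : ℝ) < #{j | B j = B p.2} := by exact_mod_cast card_fiber_pos B p.2
    have hc : (0 : ℝ) < #{q | C q = C p} := by exact_mod_cast card_fiber_pos C p
    rw [← log_mul (by positivity) (by positivity), ← log_div (by positivity) (by positivity)]
    congr 1
    field_simp
  have hprod : ∀ (h : Ω₁ → ℝ) (k : Ω₂ → ℝ),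
      ∑ p : Ω₁ × Ω₂, (h p.1 + k p.2) = N₂ * ∑ i, h i + N₁ * ∑ j, k j := by
    intro h k
    simp [Fintype.sum_prod_type, sum_add_distrib, ← sum_mul, N₁, N₂, mul_comm]
  simp only [hpoint, sum_sub_distrib, uniformEntropy, Fintype.card_prod, Nat.cast_mul]
  rw [hprod (fun i => log (N₁ / #{i' | A i' = A i})) (fun j => log (N₂ / #{j' | B j' = B j}))]
  field_simp
  simp only [N₁, N₂, mul_comm (Fintype.card Ω₂ : ℝ)]

theorem uniformEntropy_add_le [Nonempty Ω₁] [Nonempty Ω₂]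
    (A : Ω₁ → α) (B : Ω₂ → β) (C : Ω₁ × Ω₂ → γ) {K L : ℕ}
    (hA : ∀ c, ∃ T : Finset α, #T ≤ K ∧ ∀ p, C p = c → A p.1 ∈ T)
    (hB : ∀ i c, ∃ U : Finset β, #U ≤ L ∧ ∀ j, C (i, j) = c → B j ∈ U) :
    uniformEntropy A + uniformEntropy B ≤ uniformEntropy C + log (K * L) := by
  obtain ⟨i₀⟩ := ‹Nonempty Ω₁›
  obtain ⟨j₀⟩ := ‹Nonempty Ω₂›
  have hKL : (0 : ℝ) < K * L := by
    obtain ⟨T, hTK, hT⟩ := hA (C (i₀, j₀))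
    obtain ⟨U, hUL, hU⟩ := hB i₀ (C (i₀, j₀))
    have hK : 0 < K := (card_pos.2 ⟨_, hT (i₀, j₀) rfl⟩).trans_le hTK
    have hL : 0 < L := (card_pos.2 ⟨_, hU j₀ rfl⟩).trans_le hUL
    positivity
  have hgibbs := sum_log_le_of_sum_le _ (fun p => div_pos (Nat.cast_pos.2 (card_fiber_pos C p))
    (mul_pos (Nat.cast_pos.2 (card_fiber_pos A p.1)) (Nat.cast_pos.2 (card_fiber_pos B p.2))))
    hKL (sum_card_fiber_div_le A B C hA hB)
  rw [← sub_le_iff_le_add', uniformEntropy_add_sub_eq, inv_mul_le_iff₀ (by positivity)]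
  exact hgibbs

end Product

lemma exists_finset_card_le_floor_mem (a : ℝ) (k : ℕ) :
    ∃ T : Finset ℤ, #T ≤ k + 1 ∧ ∀ x ∈ Icc a (a + k), ⌊x⌋ ∈ T := by
  refine ⟨Icc ⌊a⌋ (⌊a⌋ + k), by simp [Int.card_Icc]; omega, fun x hx => mem_Icc.2 ⟨?_, ?_⟩⟩
  · exact Int.floor_mono hx.1
  · exact (Int.floor_mono hx.2).trans_eq (Int.floor_add_natCast a k)

lemma empirical_apply_Ico_toReal {Ω : Type*} [Fintype Ω] (z : Ω → ℝ) {ε : ℝ} (hε : 0 < ε)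
    (k : ℤ) :
    ((((Fintype.card Ω : ENNReal))⁻¹ • ∑ ω, Measure.dirac (z ω) :
        Measure ℝ) (Ico (k * ε) ((k + 1) * ε))).toReal =
      #{ω | ⌊z ω / ε⌋ = k} / Fintype.card Ω := by
  have hmem : ∀ ω, z ω ∈ Ico (k * ε) ((k + 1) * ε) ↔ ⌊z ω / ε⌋ = k := fun ω => by
    rw [Set.mem_Ico, Int.floor_eq_iff, le_div_iff₀ hε, div_lt_iff₀ hε]
  simp only [Measure.smul_apply, Measure.coe_finsetSum, Finset.sum_apply,
    Measure.dirac_apply' _ measurableSet_Ico, indicator_apply, hmem, Pi.one_apply, smul_eq_mul,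
    ENNReal.toReal_mul, ENNReal.toReal_inv, sum_boole, ENNReal.toReal_natCast]
  ring

lemma entI_empirical {Ω : Type*} [Fintype Ω] (z : Ω → ℝ) {ε : ℝ} (hε : 0 < ε) :
    entI ((Fintype.card Ω : ENNReal)⁻¹ • ∑ ω, Measure.dirac (z ω)) ε =
      uniformEntropy (fun ω => ⌊z ω / ε⌋) := by
  rw [entI, uniformEntropy_eq_sum_negMulLog]
  simp only [empirical_apply_Ico_toReal z hε]
  refine tsum_eq_sum fun k hk => ?_
  rw [filter_false_of_mem fun ω _ h => hk (mem_image.2 ⟨ω, mem_univ ω, h⟩)]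
  simp

section Geometry

variable {ρ δ u v : ℝ} {c : ℤ}

lemma coarse_mem_Icc_of_floor_eq (hρ : 0 < ρ) (hδ : 0 < δ) (hδ1 : δ ≤ 1) (hv : v ∈ Set.Ico 0 1)
    (hc : ⌊(u + ρ * v) / (ρ * δ)⌋ = c) :
    u / ρ ∈ Icc (c * δ - 1) (c * δ - 1 + (2 : ℕ)) := by
  obtain ⟨hlo, hhi⟩ := Int.floor_eq_iff.1 hc
  rw [le_div_iff₀ (by positivity)] at hlo
  rw [div_lt_iff₀ (by positivity)] at hhi
  obtain ⟨hv0, hv1⟩ := hv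
  constructor
  · rw [le_div_iff₀ hρ]; nlinarith
  · rw [div_le_iff₀ hρ]; push_cast; nlinarith

lemma fine_mem_Icc_of_floor_eq (hρ : 0 < ρ) (hδ : 0 < δ) (hc : ⌊(u + ρ * v) / (ρ * δ)⌋ = c) :
    v / δ ∈ Icc (c - u / (ρ * δ)) (c - u / (ρ * δ) + (1 : ℕ)) := by
  obtain ⟨hlo, hhi⟩ := Int.floor_eq_iff.1 hc
  have hsplit : v / δ = (u + ρ * v) / (ρ * δ) - u / (ρ * δ) := by
    field_simp; ring
  rw [hsplit]
  constructor <;> push_cast <;> linarith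

end Geometry

section IteratedFunctionSystem

variable {Λ : Type*} {f : Λ → ℝ → ℝ} {r : ℝ} {a : Λ → ℝ}

lemma entI_μiter [Fintype Λ] (f : Λ → ℝ → ℝ) (n : ℕ) {ε : ℝ} (hε : 0 < ε) :
    entI (μiter f n) ε = uniformEntropy (fun i : Fin n → Λ => ⌊wordComp f n i 0 / ε⌋) := by
  rw [← entI_empirical _ hε, μiter, Fintype.card_fun, Fintype.card_fin, Nat.cast_pow]

lemma wordComp_mem {X : Set ℝ} (hX : ∀ i, MapsTo (f i) X X) {x : ℝ} (hx : x ∈ X) :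
    ∀ (n : ℕ) (i : Fin n → Λ), wordComp f n i x ∈ X
  | 0, _ => hx
  | n + 1, i => hX (i 0) (wordComp_mem hX hx n _)

lemma wordComp_zero_eq_sum (hf : ∀ i x, f i x = r * x + a i) :
    ∀ (n : ℕ) (i : Fin n → Λ), wordComp f n i 0 = ∑ k : Fin n, r ^ (k : ℕ) * a (i k)
  | 0, _ => by simp [wordComp]
  | n + 1, i => by
    rw [wordComp, hf, wordComp_zero_eq_sum hf n, Fin.sum_univ_succ, mul_sum]
    simp only [Fin.val_zero, pow_zero, one_mul, Fin.val_succ, pow_succ']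
    ring_nf

lemma wordComp_append (hf : ∀ i x, f i x = r * x + a i) {m n : ℕ} (u : Fin m → Λ)
    (v : Fin n → Λ) :
    wordComp f (m + n) (Fin.append u v) 0 = wordComp f m u 0 + r ^ m * wordComp f n v 0 := by
  simp only [wordComp_zero_eq_sum hf, Fin.sum_univ_add, Fin.append_left, Fin.append_right,
    Fin.val_castAdd, Fin.val_natAdd, pow_add, mul_sum, mul_assoc]

theorem entI_μiter_add_le [Fintype Λ] [Nonempty Λ] (hf : ∀ i x, f i x = r * x + a i)
    (hr0 : 0 < r) (hr1 : r < 1) {X : Set ℝ} (hX : ∀ i, MapsTo (f i) X X) (h0X : (0 : ℝ) ∈ X)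
    (hX01 : X ⊆ Set.Ico 0 1) (m n : ℕ) :
    entI (μiter f m) (r ^ m) + entI (μiter f n) (r ^ n) ≤
      entI (μiter f (m + n)) (r ^ (m + n)) + log 6 := by
  set u := fun i : Fin m → Λ => wordComp f m i 0
  set v := fun j : Fin n → Λ => wordComp f n j 0
  have hv : ∀ j, v j ∈ Set.Ico 0 1 := fun j => hX01 (wordComp_mem hX h0X n j)
  have hρ : 0 < r ^ m := pow_pos hr0 m
  have hδ : 0 < r ^ n := pow_pos hr0 n
  have hδ1 : r ^ n ≤ 1 := pow_le_one₀ hr0.le hr1.le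
  rw [entI_μiter f m hρ, entI_μiter f n hδ, entI_μiter f (m + n) (pow_pos hr0 _),
    ← uniformEntropy_comp_equiv (Fin.appendEquiv m n)]
  have hsplit : ∀ p, wordComp f (m + n) (Fin.appendEquiv m n p) 0 = u p.1 + r ^ m * v p.2 :=
    fun p => wordComp_append hf p.1 p.2
  simp only [hsplit, pow_add]
  have key := uniformEntropy_add_le (K := 3) (L := 2) (fun i => ⌊u i / r ^ m⌋)
    (fun j => ⌊v j / r ^ n⌋) (fun p => ⌊(u p.1 + r ^ m * v p.2) / (r ^ m * r ^ n)⌋)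
    (fun c => ?_) (fun i c => ?_)
  · rwa [show ((3 : ℕ) : ℝ) * (2 : ℕ) = 6 by norm_num] at key
  · obtain ⟨T, hT, hmem⟩ := exists_finset_card_le_floor_mem (c * r ^ n - 1) 2
    exact ⟨T, hT, fun p hp => hmem _ (coarse_mem_Icc_of_floor_eq hρ hδ hδ1 (hv p.2) hp)⟩
  · obtain ⟨U, hU, hmem⟩ := exists_finset_card_le_floor_mem (c - u i / (r ^ m * r ^ n)) 1
    exact ⟨U, hU, fun j hj => hmem _ (fine_mem_Icc_of_floor_eq hρ hδ hj)⟩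

lemma entI_μiter_le [Fintype Λ] (f : Λ → ℝ → ℝ) (n : ℕ) {ε : ℝ} (hε : 0 < ε) :
    entI (μiter f n) ε ≤ n * log (Fintype.card Λ) := by
  have := uniformEntropy_le_log_card fun i : Fin n → Λ => ⌊wordComp f n i 0 / ε⌋
  rwa [Fintype.card_fun, Fintype.card_fin, Nat.cast_pow, log_pow, ← entI_μiter f n hε] at this

end IteratedFunctionSystem

lemma exists_tendsto_div_of_add_le_add (s : ℕ → ℝ) {C M : ℝ}
    (hs : ∀ m n, s m + s n ≤ s (m + n) + C) (hM : ∀ n, s n ≤ n * M) :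
    ∃ α, Tendsto (fun n => s n / n) atTop (nhds α) := by
  have hsub : Subadditive (fun n => C - s n) := fun m n => by
    show C - s (m + n) ≤ (C - s m) + (C - s n)
    linarith [hs m n]
  have hbdd : BddBelow (range fun n : ℕ => (C - s n) / n) := by
    refine ⟨-|C| - |M|, forall_mem_range.2 fun n => ?_⟩
    rcases Nat.eq_zero_or_pos n with rfl | hn
    · simp only [CharP.cast_eq_zero, div_zero]
      linarith [abs_nonneg C, abs_nonneg M]
    have hn' : (1 : ℝ) ≤ n := by exact_mod_cast hn
    rw [le_div_iff₀ (by positivity)]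
    nlinarith [hM n, neg_abs_le C, le_abs_self M, abs_nonneg C, abs_nonneg M]
  refine ⟨0 - hsub.lim, ?_⟩
  have hC : Tendsto (fun n : ℕ => C / n) atTop (nhds 0) :=
    tendsto_const_div_atTop_nhds_zero_nat C
  refine (hC.sub (hsub.tendsto_lim hbdd)).congr fun n => ?_
  simp only [sub_div, sub_sub_cancel]

theorem entropy_superadditive_and_limit_general {Λ : Type*} [Fintype Λ]
    (f : Λ → ℝ → ℝ) (r : ℝ) (a : Λ → ℝ) (hΛ : 2 ≤ Fintype.card Λ)
    (hr0 : 0 < r) (hr1 : r < 1) (hf : ∀ i x, f i x = r * x + a i)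
    (X : Set ℝ)
    (hXinv : X = ⋃ i : Λ, f i '' X)
    (h0X : (0 : ℝ) ∈ X) (hX01 : X ⊆ Set.Ico 0 1) :
    (∃ C : ℝ, ∀ m n : ℕ,
      entI (μiter f (m + n)) (r ^ (m + n)) ≥
        entI (μiter f m) (r ^ m) + entI (μiter f n) (r ^ n) - C) ∧
    ∃ α : ℝ, Tendsto
      (fun n : ℕ => entI (μiter f n) (r ^ n) / (n * Real.log (1 / r)))
      atTop (nhds α) := by
  have : Nonempty Λ := Fintype.card_pos_iff.1 (by omega)
  have hX : ∀ i, MapsTo (f i) X X := fun i x hx =>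
    hXinv.symm.subset (mem_iUnion_of_mem i (mem_image_of_mem _ hx))
  have hsuper := entI_μiter_add_le hf hr0 hr1 hX h0X hX01
  obtain ⟨α, hα⟩ := exists_tendsto_div_of_add_le_add _ hsuper
    fun n => entI_μiter_le f n (pow_pos hr0 n)
  refine ⟨⟨log 6, fun m n => by linarith [hsuper m n]⟩, α / log (1 / r), ?_⟩
  simpa only [div_div] using hα.div_const (log (1 / r))

/-- For `s_n = H(μ⁽ⁿ⁾, I_{rⁿ})` there is a constant `C` with
`s_{m+n} ≥ s_m + s_n − C`, and hence `s_n/(n log(1/r))` converges. -/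
theorem entropy_superadditive_and_limit {Λ : Type*} [Fintype Λ]
    (f : Λ → ℝ → ℝ) (r : ℝ) (a : Λ → ℝ) (hΛ : 2 ≤ Fintype.card Λ)
    (hr0 : 0 < r) (hr1 : r < 1) (hf : ∀ i x, f i x = r * x + a i)
    (X : Set ℝ) (hXne : X.Nonempty) (hXc : IsCompact X)
    (hXinv : X = ⋃ i : Λ, f i '' X)
    (h0X : (0 : ℝ) ∈ X) (hX01 : X ⊆ Set.Ico 0 1) :
    (∃ C : ℝ, ∀ m n : ℕ,
      entI (μiter f (m + n)) (r ^ (m + n)) ≥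
        entI (μiter f m) (r ^ m) + entI (μiter f n) (r ^ n) - C) ∧
    ∃ α : ℝ, Tendsto
      (fun n : ℕ => entI (μiter f n) (r ^ n) / (n * Real.log (1 / r)))
      atTop (nhds α) :=
  entropy_superadditive_and_limit_general f r a hΛ hr0 hr1 hf X hXinv h0X hX01
end

section
/- Suppose entropy satisfies concavity and the bound on convolutions: if μ is supported on a set of diameter ≤ ε and ν is any probability measure on ℝ, then H(μ * ν, I_γ) ≥ H(μ, I_γ) − O(1) for γ < ε. More precisely: for probability measures μ supported on [0, ε) and ν on ℝ, and γ < ε, H(μ * ν, I_γ) ≥ H(ν, I_ε) + H(μ, I_γ) − C for an absolute constant C. -/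
open MeasureTheory

/-- Convolution of measures on `ℝ` (pushforward of the product under addition). -/
noncomputable def mconv (μ ν : Measure ℝ) : Measure ℝ :=
  (μ.prod ν).map (fun p : ℝ × ℝ => p.1 + p.2)

/-- The entropy (valued in `ℝ≥0∞`) of `μ` with respect to the partition `I_ε`
of `ℝ` into intervals `[kε, (k+1)ε)`. -/
noncomputable def entE (μ : Measure ℝ) (ε : ℝ) : ENNReal :=
  ∑' k : ℤ, ENNReal.ofReal
    (Real.negMulLog ((μ (Set.Ico ((k : ℝ) * ε) (((k : ℝ) + 1) * ε))).toReal))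

/-!
Let `X ∼ μ` and `Y ∼ ν` be independent, `K` the index of the `ε`-cell containing `Y` and `J`
that of the `γ`-cell containing `X + Y`. Since `0 ≤ X < ε` and `γ < ε`, `J` determines `K` up
to three values, so `H(K, J) ≤ H(J) + log 3 = H(μ ∗ ν, I_γ) + log 3`. Given `Y = y`, `J` is the
cell of `X` in the partition `I_γ - y`, each cell of which meets at most two cells of `I_γ`; so
its entropy is at least `H(μ, I_γ) - log 2`. By concavity of `t ↦ -t log t`, `H(J | K)` is at
least the average of these entropies, and so
`H(K, J) = H(K) + H(J | K) ≥ H(ν, I_ε) + H(μ, I_γ) - log 2`.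
-/

open Function Real Set ProbabilityTheory
open scoped ENNReal

noncomputable def discreteEntropy {ι : Type*} (w : ι → ℝ≥0∞) : ℝ≥0∞ :=
  ∑' i, ENNReal.ofReal (negMulLog (w i).toReal)

lemma sum_negMulLog_le_negMulLog_sum_add_mul_log {ι : Type*} (s : Finset ι) {w : ι → ℝ}
    (hw : ∀ i ∈ s, 0 ≤ w i) {n : ℕ} (hn : s.card ≤ n) :
    ∑ i ∈ s, negMulLog (w i) ≤ negMulLog (∑ i ∈ s, w i) + (∑ i ∈ s, w i) * log n := by
  rcases s.eq_empty_or_nonempty with rfl | hs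
  · simp
  set m : ℝ := (s.card : ℝ)
  have hm : 0 < m := by simpa [m] using hs.card_pos
  have jensen := concaveOn_negMulLog.le_map_sum (t := s) (w := fun _ => m⁻¹) (p := w)
    (fun _ _ => by positivity) (by simp [m, hm.ne']) hw
  simp only [smul_eq_mul, ← Finset.mul_sum] at jensen
  have hlog : log m ≤ log n := log_le_log hm (by simp only [m]; exact_mod_cast hn)
  have hS : 0 ≤ ∑ i ∈ s, w i := Finset.sum_nonneg hw
  calc ∑ i ∈ s, negMulLog (w i) = m * (m⁻¹ * ∑ i ∈ s, negMulLog (w i)) := by field_simp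
    _ ≤ m * negMulLog (m⁻¹ * ∑ i ∈ s, w i) := mul_le_mul_of_nonneg_left jensen hm.le
    _ = negMulLog (∑ i ∈ s, w i) + (∑ i ∈ s, w i) * log m := by
      rw [negMulLog_mul, negMulLog, log_inv]; field_simp; ring
    _ ≤ _ := by gcongr

lemma discreteEntropy_le_of_support_subset {ι : Type*} {w : ι → ℝ≥0∞} (s : Finset ι)
    (hw : ∀ i ∉ s, w i = 0) (hw1 : ∑' i, w i ≤ 1) {n : ℕ} (hn : s.card ≤ n) :
    discreteEntropy w ≤
      ENNReal.ofReal (negMulLog (∑' i, w i).toReal) + (∑' i, w i) * ENNReal.ofReal (log n) := by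
  have hwS : ∑' i, w i = ∑ i ∈ s, w i := tsum_eq_sum hw
  have hS_top : ∑' i, w i ≠ ⊤ := (hw1.trans_lt ENNReal.one_lt_top).ne
  have hw_top : ∀ i ∈ s, w i ≠ ⊤ := fun i _ => ne_top_of_le_ne_top hS_top (ENNReal.le_tsum i)
  have hS1 : (∑' i, w i).toReal ≤ 1 := ENNReal.toReal_le_of_le_ofReal zero_le_one (by simpa)
  have hnonneg : ∀ i ∈ s, 0 ≤ negMulLog (w i).toReal := fun i _ =>
    negMulLog_nonneg ENNReal.toReal_nonneg
      (ENNReal.toReal_le_of_le_ofReal zero_le_one (by simpa using (ENNReal.le_tsum i).trans hw1))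
  calc discreteEntropy w = ENNReal.ofReal (∑ i ∈ s, negMulLog (w i).toReal) := by
        rw [discreteEntropy, tsum_eq_sum (s := s) (fun i hi => by simp [hw i hi]),
          ENNReal.ofReal_sum_of_nonneg hnonneg]
    _ ≤ ENNReal.ofReal (negMulLog (∑' i, w i).toReal + (∑' i, w i).toReal * log n) := by
        refine ENNReal.ofReal_le_ofReal ?_
        rw [hwS, ENNReal.toReal_sum hw_top]
        exact sum_negMulLog_le_negMulLog_sum_add_mul_log s (fun _ _ => ENNReal.toReal_nonneg) hn
    _ = _ := by
        rw [ENNReal.ofReal_add (negMulLog_nonneg ENNReal.toReal_nonneg hS1) (by positivity),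
          ENNReal.ofReal_mul ENNReal.toReal_nonneg, ENNReal.ofReal_toReal hS_top]

lemma ofReal_negMulLog_tsum_le {ι : Type*} (w : ι → ℝ≥0∞) (hw1 : ∑' i, w i ≤ 1) :
    ENNReal.ofReal (negMulLog (∑' i, w i).toReal) ≤ discreteEntropy w := by
  set S := ∑' i, w i
  have hS_top : S ≠ ⊤ := (hw1.trans_lt ENNReal.one_lt_top).ne
  have hwS : ∀ i, w i ≤ S := ENNReal.le_tsum
  rw [negMulLog, neg_mul, ← mul_neg, ENNReal.ofReal_mul ENNReal.toReal_nonneg,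
    ENNReal.ofReal_toReal hS_top, ← ENNReal.tsum_mul_right]
  refine ENNReal.tsum_le_tsum fun i => ?_
  rcases eq_or_ne (w i) 0 with hi | hi
  · simp [hi]
  have hi_top : w i ≠ ⊤ := ne_top_of_le_ne_top hS_top (hwS i)
  rw [← ENNReal.ofReal_toReal hi_top, ← ENNReal.ofReal_mul ENNReal.toReal_nonneg,
    ENNReal.toReal_ofReal ENNReal.toReal_nonneg, negMulLog, neg_mul, ← mul_neg]
  gcongr
  exacts [ENNReal.toReal_pos hi hi_top, hwS i]

lemma ofReal_negMulLog_mul {a b : ℝ≥0∞} (ha : a ≤ 1) (hb : b ≤ 1) :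
    ENNReal.ofReal (negMulLog (a * b).toReal) =
      b * ENNReal.ofReal (negMulLog a.toReal) + a * ENNReal.ofReal (negMulLog b.toReal) := by
  have ha1 : a.toReal ≤ 1 := ENNReal.toReal_le_of_le_ofReal zero_le_one (by simpa)
  have hb1 : b.toReal ≤ 1 := ENNReal.toReal_le_of_le_ofReal zero_le_one (by simpa)
  rw [ENNReal.toReal_mul, negMulLog_mul, ENNReal.ofReal_add
      (mul_nonneg ENNReal.toReal_nonneg (negMulLog_nonneg ENNReal.toReal_nonneg ha1))
      (mul_nonneg ENNReal.toReal_nonneg (negMulLog_nonneg ENNReal.toReal_nonneg hb1)),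
    ENNReal.ofReal_mul ENNReal.toReal_nonneg, ENNReal.ofReal_mul ENNReal.toReal_nonneg,
    ENNReal.ofReal_toReal (ne_top_of_le_ne_top ENNReal.one_ne_top ha),
    ENNReal.ofReal_toReal (ne_top_of_le_ne_top ENNReal.one_ne_top hb)]

lemma discreteEntropy_const_mul {ι : Type*} {p : ℝ≥0∞} (hp : p ≤ 1) {w : ι → ℝ≥0∞}
    (hw : ∑' i, w i = 1) :
    discreteEntropy (fun i => p * w i) =
      ENNReal.ofReal (negMulLog p.toReal) + p * discreteEntropy w := by
  have hw1 : ∀ i, w i ≤ 1 := fun i => hw ▸ ENNReal.le_tsum i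
  simp only [discreteEntropy, ofReal_negMulLog_mul hp (hw1 _), ENNReal.tsum_add,
    ENNReal.tsum_mul_right, ENNReal.tsum_mul_left, hw, one_mul]

lemma lintegral_ofReal_negMulLog_le {α : Type*} [MeasurableSpace α] (ρ : Measure α)
    [IsProbabilityMeasure ρ] {f : α → ℝ≥0∞} (hf : AEMeasurable f ρ) (hf1 : ∀ x, f x ≤ 1) :
    ∫⁻ x, ENNReal.ofReal (negMulLog (f x).toReal) ∂ρ ≤
      ENNReal.ofReal (negMulLog (∫⁻ x, f x ∂ρ).toReal) := by
  have hg1 : ∀ x, (f x).toReal ≤ 1 := fun x =>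
    ENNReal.toReal_le_of_le_ofReal zero_le_one (by simpa using hf1 x)
  have hg : Integrable (fun x => (f x).toReal) ρ :=
    Integrable.of_bound hf.ennreal_toReal.aestronglyMeasurable 1 (.of_forall fun x => by
      rw [Real.norm_of_nonneg ENNReal.toReal_nonneg]; exact hg1 x)
  have hng : Integrable (fun x => negMulLog (f x).toReal) ρ :=
    Integrable.of_bound
      (continuous_negMulLog.comp_aestronglyMeasurable hf.ennreal_toReal.aestronglyMeasurable) 1
      (.of_forall fun x => by
        rw [Real.norm_of_nonneg (negMulLog_nonneg ENNReal.toReal_nonneg (hg1 x))]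
        exact (negMulLog_le_one_sub_self ENNReal.toReal_nonneg).trans (by
          linarith [ENNReal.toReal_nonneg (a := f x)]))
  have hf_eq : ∫⁻ x, f x ∂ρ = ENNReal.ofReal (∫ x, (f x).toReal ∂ρ) := by
    rw [ofReal_integral_eq_lintegral_ofReal hg (.of_forall fun _ => ENNReal.toReal_nonneg)]
    exact lintegral_congr fun x =>
      (ENNReal.ofReal_toReal (ne_top_of_le_ne_top ENNReal.one_ne_top (hf1 x))).symm
  rw [← ofReal_integral_eq_lintegral_ofReal hng
      (.of_forall fun x => negMulLog_nonneg ENNReal.toReal_nonneg (hg1 x)),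
    hf_eq, ENNReal.toReal_ofReal (integral_nonneg fun _ => ENNReal.toReal_nonneg)]
  exact ENNReal.ofReal_le_ofReal (concaveOn_negMulLog.le_map_integral
    continuous_negMulLog.continuousOn isClosed_Ici
    (.of_forall fun _ => ENNReal.toReal_nonneg) hg hng)

structure IsMeasurablePartition {α ι : Type*} [MeasurableSpace α] (P : ι → Set α) : Prop where
  measurableSet : ∀ i, MeasurableSet (P i)
  pairwise_disjoint : Pairwise (Disjoint on P)
  iUnion_eq_univ : ⋃ i, P i = univ

namespace IsMeasurablePartition

variable {α β ι : Type*} [MeasurableSpace α] [MeasurableSpace β] {P : ι → Set α}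

lemma tsum_measure_inter [Countable ι] (hP : IsMeasurablePartition P) (m : Measure α)
    {A : Set α} (hA : MeasurableSet A) : ∑' i, m (A ∩ P i) = m A := by
  rw [← measure_iUnion (fun i j hij => ((hP.pairwise_disjoint hij).inter_left' A).inter_right' A)
    fun i => hA.inter (hP.measurableSet i), ← inter_iUnion, hP.iUnion_eq_univ, inter_univ]

lemma tsum_measure [Countable ι] (hP : IsMeasurablePartition P) (m : Measure α) :
    ∑' i, m (P i) = m univ := by
  simpa using hP.tsum_measure_inter m MeasurableSet.univ

lemma preimage (hP : IsMeasurablePartition P) {f : β → α} (hf : Measurable f) :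
    IsMeasurablePartition fun i => f ⁻¹' P i where
  measurableSet i := hf (hP.measurableSet i)
  pairwise_disjoint _ _ hij := (hP.pairwise_disjoint hij).preimage f
  iUnion_eq_univ := by rw [← preimage_iUnion, hP.iUnion_eq_univ, preimage_univ]

end IsMeasurablePartition

def cell (c : ℝ) (k : ℤ) : Set ℝ := Ico (k * c) ((k + 1) * c)

lemma mem_cell_iff {c x : ℝ} {k : ℤ} (hc : 0 < c) : x ∈ cell c k ↔ ⌊x / c⌋ = k := by
  rw [Int.floor_eq_iff, le_div_iff₀ hc, div_lt_iff₀ hc]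
  rfl

lemma isMeasurablePartition_cell {c : ℝ} (hc : 0 < c) : IsMeasurablePartition (cell c) where
  measurableSet _ := measurableSet_Ico
  pairwise_disjoint _ _ hkl := disjoint_left.2 fun _ hk hl =>
    hkl (((mem_cell_iff hc).1 hk).symm.trans ((mem_cell_iff hc).1 hl))
  iUnion_eq_univ := eq_univ_of_forall fun _ => mem_iUnion.2 ⟨_, (mem_cell_iff hc).2 rfl⟩

lemma mem_Ioo_floor_of_lt {a : ℝ} {n : ℕ} {k : ℤ} (h₁ : a < k) (h₂ : k < a + n) :
    k ∈ Finset.Ioo ⌊a⌋ (⌊a⌋ + n + 1) := by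
  have h₃ : ⌊a⌋ < k := Int.floor_lt.2 h₁
  have h₄ : (k : ℝ) < ⌊a⌋ + n + 1 := by linarith [Int.lt_floor_add_one a]
  rw [Finset.mem_Ioo]
  exact ⟨h₃, by exact_mod_cast h₄⟩

lemma card_Ioo_floor (a : ℝ) (n : ℕ) : (Finset.Ioo ⌊a⌋ (⌊a⌋ + n + 1)).card = n := by
  rw [Int.card_Ioo]; omega

section PartitionEntropy

variable {α β ι κ : Type*} [MeasurableSpace α] [MeasurableSpace β] [Countable κ]

lemma discreteEntropy_le_inter (m : Measure α) [IsProbabilityMeasure m] {P : ι → Set α}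
    {Q : κ → Set α} (hP : ∀ i, MeasurableSet (P i)) (hQ : IsMeasurablePartition Q) :
    discreteEntropy (fun i => m (P i)) ≤
      discreteEntropy (fun ij : ι × κ => m (P ij.1 ∩ Q ij.2)) := by
  rw [discreteEntropy, discreteEntropy, ENNReal.tsum_prod']
  refine ENNReal.tsum_le_tsum fun i => ?_
  rw [← hQ.tsum_measure_inter m (hP i)]
  exact ofReal_negMulLog_tsum_le _ ((hQ.tsum_measure_inter m (hP i)).trans_le prob_le_one)

lemma discreteEntropy_inter_le_add_log [Countable ι] (m : Measure α) [IsProbabilityMeasure m]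
    {P : ι → Set α} {Q : κ → Set α} (hP : IsMeasurablePartition P)
    (hQ : IsMeasurablePartition Q) {n : ℕ}
    (hfiber : ∀ j, ∃ s : Finset ι, s.card ≤ n ∧ ∀ i ∉ s, m (P i ∩ Q j) = 0) :
    discreteEntropy (fun ij : ι × κ => m (P ij.1 ∩ Q ij.2)) ≤
      discreteEntropy (fun j => m (Q j)) + ENNReal.ofReal (log n) := by
  have hcol : ∀ j, ∑' i, m (P i ∩ Q j) = m (Q j) := fun j => by
    simpa only [inter_comm] using hP.tsum_measure_inter m (hQ.measurableSet j)
  have hcolumn : ∀ j, ∑' i, ENNReal.ofReal (negMulLog (m (P i ∩ Q j)).toReal) ≤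
      ENNReal.ofReal (negMulLog (m (Q j)).toReal) + m (Q j) * ENNReal.ofReal (log n) := fun j => by
    obtain ⟨s, hs, hzero⟩ := hfiber j
    simpa only [hcol, discreteEntropy] using
      discreteEntropy_le_of_support_subset s hzero ((hcol j).trans_le prob_le_one) hs
  calc _ = ∑' j, ∑' i, ENNReal.ofReal (negMulLog (m (P i ∩ Q j)).toReal) := by
        rw [discreteEntropy, ENNReal.tsum_prod', ENNReal.tsum_comm]
    _ ≤ ∑' j, (ENNReal.ofReal (negMulLog (m (Q j)).toReal) +
          m (Q j) * ENNReal.ofReal (log n)) := ENNReal.tsum_le_tsum hcolumn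
    _ = _ := by
        rw [ENNReal.tsum_add, ENNReal.tsum_mul_right, hQ.tsum_measure, measure_univ, one_mul]
        rfl

lemma prod_snd_preimage_inter_eq_setLIntegral (μ : Measure α) (ν : Measure β) [SFinite μ]
    [SFinite ν] (s : Set β) {A : Set (α × β)} (hA : MeasurableSet A) :
    μ.prod ν (Prod.snd ⁻¹' s ∩ A) = ∫⁻ y in s, μ ((fun x => (x, y)) ⁻¹' A) ∂ν := by
  have : μ.prod (ν.restrict s) = (μ.prod ν).restrict (univ ×ˢ s) := by
    rw [← Measure.prod_restrict, Measure.restrict_univ]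
  rw [← Measure.prod_apply_symm hA, this, Measure.restrict_apply hA, univ_prod, inter_comm]

variable (μ : Measure α) (ν : Measure β) [IsProbabilityMeasure μ] [IsProbabilityMeasure ν]
  {Q : κ → Set (α × β)} {h c : ℝ≥0∞}

lemma ofReal_negMulLog_add_le_discreteEntropy_inter (s : Set β) (hQ : IsMeasurablePartition Q)
    (hslice : ∀ y, h ≤ discreteEntropy (fun j => μ ((fun x => (x, y)) ⁻¹' Q j)) + c) :
    ENNReal.ofReal (negMulLog (ν s).toReal) + ν s * h ≤
      discreteEntropy (fun j => μ.prod ν (Prod.snd ⁻¹' s ∩ Q j)) + ν s * c := by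
  rcases eq_or_ne (ν s) 0 with hs0 | hs0
  · simp [hs0]
  set G : κ → β → ℝ≥0∞ := fun j y => μ ((fun x => (x, y)) ⁻¹' Q j)
  have hG : ∀ j, Measurable (G j) := fun j =>
    measurable_measure_prodMk_right (hQ.measurableSet j)
  have hGsum : ∀ y, ∑' j, G j y = 1 := fun y => by
    rw [(hQ.preimage measurable_prodMk_right).tsum_measure, measure_univ]
  have := cond_isProbabilityMeasure (μ := ν) hs0
  set a : κ → ℝ≥0∞ := fun j => ∫⁻ y, G j y ∂ν[|s]
  have ha : ∀ j, μ.prod ν (Prod.snd ⁻¹' s ∩ Q j) = ν s * a j := fun j => by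
    dsimp only [a]
    rw [prod_snd_preimage_inter_eq_setLIntegral μ ν s (hQ.measurableSet j),
      ProbabilityTheory.cond, lintegral_smul_measure, smul_eq_mul, ← mul_assoc,
      ENNReal.mul_inv_cancel hs0 (measure_ne_top ν s), one_mul]
  have ha_sum : ∑' j, a j = 1 := by
    rw [← lintegral_tsum fun j => (hG j).aemeasurable]
    simp [hGsum]
  have hjensen : ∫⁻ y, discreteEntropy (fun j => G j y) ∂ν[|s] ≤ discreteEntropy a := by
    simp only [discreteEntropy]
    rw [lintegral_tsum (f := fun j y => ENNReal.ofReal (negMulLog (G j y).toReal)) fun j =>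
      (continuous_negMulLog.measurable.comp (hG j).ennreal_toReal).ennreal_ofReal.aemeasurable]
    exact ENNReal.tsum_le_tsum fun j =>
      lintegral_ofReal_negMulLog_le _ (hG j).aemeasurable fun _ => prob_le_one
  have havg : h ≤ ∫⁻ y, discreteEntropy (fun j => G j y) ∂ν[|s] + c :=
    calc h = ∫⁻ _, h ∂ν[|s] := by simp
      _ ≤ ∫⁻ y, (discreteEntropy (fun j => G j y) + c) ∂ν[|s] := lintegral_mono hslice
      _ = _ := by rw [lintegral_add_right _ measurable_const]; simp
  calc ENNReal.ofReal (negMulLog (ν s).toReal) + ν s * h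
      ≤ ENNReal.ofReal (negMulLog (ν s).toReal) + ν s * (discreteEntropy a + c) := by
        gcongr; exact havg.trans (by gcongr)
    _ = discreteEntropy (fun j => ν s * a j) + ν s * c := by
        rw [discreteEntropy_const_mul prob_le_one ha_sum, mul_add, add_assoc]
    _ = _ := by simp_rw [ha]

lemma discreteEntropy_add_le_discreteEntropy_inter_prod [Countable ι] {B : ι → Set β}
    (hB : IsMeasurablePartition B) (hQ : IsMeasurablePartition Q)
    (hslice : ∀ y, h ≤ discreteEntropy (fun j => μ ((fun x => (x, y)) ⁻¹' Q j)) + c) :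
    discreteEntropy (fun k => ν (B k)) + h ≤
      discreteEntropy (fun kj : ι × κ => μ.prod ν (Prod.snd ⁻¹' B kj.1 ∩ Q kj.2)) + c := by
  have hν : ∑' k, ν (B k) = 1 := by rw [hB.tsum_measure, measure_univ]
  calc discreteEntropy (fun k => ν (B k)) + h
      = ∑' k, (ENNReal.ofReal (negMulLog (ν (B k)).toReal) + ν (B k) * h) := by
        rw [ENNReal.tsum_add, ENNReal.tsum_mul_right, hν, one_mul, discreteEntropy]
    _ ≤ ∑' k, (discreteEntropy (fun j => μ.prod ν (Prod.snd ⁻¹' B k ∩ Q j)) + ν (B k) * c) :=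
        ENNReal.tsum_le_tsum fun k =>
          ofReal_negMulLog_add_le_discreteEntropy_inter μ ν (B k) hQ hslice
    _ = _ := by
        rw [ENNReal.tsum_add, ENNReal.tsum_mul_right, hν, one_mul]
        simp only [discreteEntropy, ENNReal.tsum_prod']

end PartitionEntropy

lemma entE_eq_discreteEntropy (μ : Measure ℝ) (ε : ℝ) :
    entE μ ε = discreteEntropy fun k => μ (cell ε k) := rfl

lemma entE_mconv (μ ν : Measure ℝ) (γ : ℝ) :
    entE (mconv μ ν) γ =
      discreteEntropy fun j => μ.prod ν ((fun p : ℝ × ℝ => p.1 + p.2) ⁻¹' cell γ j) := by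
  rw [entE_eq_discreteEntropy, mconv]
  congr 1 with j
  exact Measure.map_apply (measurable_fst.add measurable_snd) measurableSet_Ico

lemma entE_le_discreteEntropy_shift_add_log (μ : Measure ℝ) [IsProbabilityMeasure μ] {γ : ℝ}
    (hγ : 0 < γ) (y : ℝ) :
    entE μ γ ≤ discreteEntropy (fun j => μ ((fun x => x + y) ⁻¹' cell γ j)) +
      ENNReal.ofReal (log 2) := by
  have hcell := isMeasurablePartition_cell hγ
  have hshift := hcell.preimage (measurable_add_const y)
  refine (discreteEntropy_le_inter μ hcell.measurableSet hshift).trans <|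
    discreteEntropy_inter_le_add_log μ hcell hshift fun j =>
      ⟨_, (card_Ioo_floor (j - 1 - y / γ) 2).le, fun i hi => ?_⟩
  contrapose! hi
  obtain ⟨x, ⟨hxi, hxi'⟩, hxj, hxj'⟩ := nonempty_of_measure_ne_zero hi
  have hγa : (j - 1 - y / γ) * γ = j * γ - γ - y := by field_simp
  refine mem_Ioo_floor_of_lt (lt_of_mul_lt_mul_right ?_ hγ.le) (lt_of_mul_lt_mul_right ?_ hγ.le)
  · linarith
  · push_cast; linarith

lemma measure_cell_snd_inter_cell_add_eq_zero (μ ν : Measure ℝ) [IsProbabilityMeasure μ]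
    [SFinite ν] {ε γ : ℝ} (hγ : 0 < γ) (hγε : γ < ε) (hμ : μ (Ico 0 ε) = 1) (j k : ℤ)
    (hk : k ∉ Finset.Ioo ⌊j * γ / ε - 2⌋ (⌊j * γ / ε - 2⌋ + (3 : ℕ) + 1)) :
    μ.prod ν (Prod.snd ⁻¹' cell ε k ∩ (fun p : ℝ × ℝ => p.1 + p.2) ⁻¹' cell γ j) = 0 := by
  have hε : 0 < ε := hγ.trans hγε
  refine measure_mono_null (t := (Ico 0 ε)ᶜ ×ˢ univ) ?_ ?_
  · rintro ⟨x, y⟩ ⟨⟨hyk, hyk'⟩, hxyj, hxyj'⟩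
    simp only [mem_prod, mem_compl_iff, mem_univ, and_true]
    rintro ⟨hx, hx'⟩
    -- `k ε ≤ y ≤ x + y < (j + 1) γ < j γ + ε` and `(k + 1) ε > y > x + y - ε ≥ j γ - ε`
    have hεa : (j * γ / ε - 2) * ε = j * γ - 2 * ε := by field_simp
    refine hk (mem_Ioo_floor_of_lt (lt_of_mul_lt_mul_right ?_ hε.le)
      (lt_of_mul_lt_mul_right ?_ hε.le))
    · linarith
    · push_cast; nlinarith
  · rw [Measure.prod_prod, (prob_compl_eq_zero_iff measurableSet_Ico).2 hμ, zero_mul]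

/-- Entropy of a convolution with a measure concentrated at scale `ε` adds the
entropies across the separated scales up to a bounded error: if `μ` is a
probability measure on `[0, ε)`, `ν` any probability measure on `ℝ`, and
`γ < ε`, then `H(μ ∗ ν, I_γ) ≥ H(ν, I_ε) + H(μ, I_γ) − C` for an absolute
constant `C`. -/
theorem entropy_convolution_lower_bound :
    ∃ C : ENNReal, C ≠ ⊤ ∧
      ∀ (μ ν : Measure ℝ), IsProbabilityMeasure μ → IsProbabilityMeasure ν →
        ∀ ε γ : ℝ, 0 < γ → γ < ε → μ (Set.Ico 0 ε) = 1 →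
          entE ν ε + entE μ γ ≤ entE (mconv μ ν) γ + C := by
  refine ⟨ENNReal.ofReal (log 3) + ENNReal.ofReal (log 2), by finiteness, ?_⟩
  intro μ ν _ _ ε γ hγ hγε hμ
  have hε : 0 < ε := hγ.trans hγε
  have hcells := (isMeasurablePartition_cell hε).preimage (measurable_snd (α := ℝ))
  have hsums := (isMeasurablePartition_cell hγ).preimage (f := fun p : ℝ × ℝ => p.1 + p.2)
    (measurable_fst.add measurable_snd)
  have chain := discreteEntropy_add_le_discreteEntropy_inter_prod μ ν
    (isMeasurablePartition_cell hε) hsums (entE_le_discreteEntropy_shift_add_log μ hγ)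
  have fiber := discreteEntropy_inter_le_add_log (μ.prod ν) hcells hsums fun j =>
    ⟨_, (card_Ioo_floor _ 3).le, measure_cell_snd_inter_cell_add_eq_zero μ ν hγ hγε hμ j⟩
  rw [entE_mconv, ← add_assoc]
  refine chain.trans (add_le_add_left ?_ _)
  exact_mod_cast fiber
end

section
/- For every n ≥ 1, the set A_n = {Σ_{i=1}^n a_i 2^{−i²} : a_i ∈ {1, …, 2^i}} ⊆ ℝ has cardinality |A_n| = 2^{n(n+1)/2}, any two distinct points of A_n are at distance ≥ 4^{−n²}, and |A_n + A_n| ≤ 2^n |A_n|, so that log|A_n+A_n| / log|A_n| → 1 as n → ∞. -/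
/-!
Multiplying by `2^{n²}` sends the point `Σ aᵢ 2^{-i²}` of `A_n` to the natural number
`Σ aᵢ 2^{n² - i²}`, in which `aᵢ - 1 < 2^i` occupies its own block of `2i - 1` binary digits.
So the digits are determined by the point, which gives `|A_n| = ∏ 2^i = 2^{n(n+1)/2}`, and two
distinct points differ by at least `2^{-n²}`. The digits of a point of `A_n + A_n` lie in
`{2, …, 2^{i+1}}`, a translate of a box with `∏ 2^{i+1} = 2ⁿ |A_n|` points. Finally
`|A_n| ≤ |A_n + A_n| ≤ 2ⁿ |A_n|` and `log |A_n| ≍ n²` squeeze the ratio of logarithms to `1`.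
-/

open Filter Pointwise

/-- `A_n = {Σ_{i=1}^n a_i 2^{−i²} : 1 ≤ a_i ≤ 2^i}`. -/
noncomputable def An (n : ℕ) : Finset ℝ :=
  Finset.image
    (fun a : (i : Fin n) → Fin (2 ^ ((i : ℕ) + 1)) =>
      ∑ i : Fin n, (((a i : ℕ) + 1 : ℕ) : ℝ) * (2 : ℝ) ^ (-(((i : ℕ) + 1 : ℤ) ^ 2)))
    Finset.univ

open Finset

def blockSum (a : ℕ → ℕ) (n : ℕ) : ℕ :=
  ∑ i ∈ range n, a i * 2 ^ (n ^ 2 - (i + 1) ^ 2)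

theorem blockSum_add (a b : ℕ → ℕ) (n : ℕ) :
    blockSum (a + b) n = blockSum a n + blockSum b n := by
  simp only [blockSum, Pi.add_apply, add_mul, sum_add_distrib]

theorem blockSum_succ (a : ℕ → ℕ) (n : ℕ) :
    blockSum a (n + 1) = 2 ^ (2 * n + 1) * blockSum a n + a n := by
  rw [blockSum, sum_range_succ, blockSum, mul_sum, Nat.sub_self, pow_zero, mul_one]
  congr 1
  refine sum_congr rfl fun i hi => ?_
  have hin : (i + 1) ^ 2 ≤ n ^ 2 := Nat.pow_le_pow_left (mem_range.1 hi) 2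
  rw [mul_left_comm, ← pow_add]
  congr 2
  rw [add_sq]
  omega

theorem eq_of_blockSum_eq {a b : ℕ → ℕ} {n : ℕ} (ha : ∀ i < n, a i < 2 ^ (2 * i + 1))
    (hb : ∀ i < n, b i < 2 ^ (2 * i + 1)) (h : blockSum a n = blockSum b n) :
    ∀ i < n, a i = b i := by
  induction n with
  | zero => simp
  | succ n ih =>
    rw [blockSum_succ, blockSum_succ] at h
    have hlast : a n = b n := by
      have h := congrArg (· % 2 ^ (2 * n + 1)) h
      rwa [Nat.mul_add_mod, Nat.mul_add_mod, Nat.mod_eq_of_lt (ha n n.lt_succ_self),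
        Nat.mod_eq_of_lt (hb n n.lt_succ_self)] at h
    have hinit : blockSum a n = blockSum b n := by
      rw [hlast] at h
      exact Nat.eq_of_mul_eq_mul_left (by positivity) (Nat.add_right_cancel h)
    intro i hi
    rcases Nat.lt_succ_iff_lt_or_eq.1 hi with hi | rfl
    · exact ih (fun i hi' => ha i (hi'.trans n.lt_succ_self))
        (fun i hi' => hb i (hi'.trans n.lt_succ_self)) hinit i hi
    · exact hlast

section Box

variable {R : Type*} [Semiring R] {n : ℕ}

/- `boxImage L w` is the generalized arithmetic progression `{∑ xᵢ wᵢ : 1 ≤ xᵢ ≤ Lᵢ}`,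
the digit `a i : Fin (L i)` standing for `xᵢ = a i + 1`. -/
def boxSum (w : Fin n → R) {L : Fin n → ℕ} (a : (i : Fin n) → Fin (L i)) : R :=
  ∑ i, (((a i : ℕ) + 1 : ℕ) : R) * w i

variable [DecidableEq R]

def boxImage (L : Fin n → ℕ) (w : Fin n → R) : Finset R :=
  univ.image (boxSum w : ((i : Fin n) → Fin (L i)) → R)

theorem card_boxImage_le (L : Fin n → ℕ) (w : Fin n → R) : #(boxImage L w) ≤ ∏ i, L i :=
  card_image_le.trans_eq (by simp)

theorem card_boxImage {L : Fin n → ℕ} {w : Fin n → R}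
    (hw : Function.Injective (boxSum w : ((i : Fin n) → Fin (L i)) → R)) :
    #(boxImage L w) = ∏ i, L i := by
  rw [boxImage, card_image_of_injective _ hw]
  simp

theorem boxImage_add_subset (L : Fin n → ℕ) (w : Fin n → R) :
    boxImage L w + boxImage L w ⊆ (boxImage (fun i => 2 * L i) w).image (· + ∑ i, w i) := by
  intro x hx
  obtain ⟨_, ha, _, hb, rfl⟩ := mem_add.1 hx
  obtain ⟨a, -, rfl⟩ := mem_image.1 ha
  obtain ⟨b, -, rfl⟩ := mem_image.1 hb
  refine mem_image.2
    ⟨_, mem_image_of_mem _ (mem_univ fun i => ⟨a i + b i, by dsimp only; omega⟩), ?_⟩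
  simp only [boxSum, ← sum_add_distrib]
  refine sum_congr rfl fun i _ => ?_
  push_cast
  simp only [add_mul, one_mul]
  abel

theorem card_boxImage_add_le (L : Fin n → ℕ) (w : Fin n → R) :
    #(boxImage L w + boxImage L w) ≤ 2 ^ n * ∏ i, L i :=
  calc #(boxImage L w + boxImage L w)
      ≤ #((boxImage (fun i => 2 * L i) w).image (· + ∑ i, w i)) :=
        card_le_card (boxImage_add_subset L w)
    _ ≤ ∏ i, 2 * L i := card_image_le.trans (card_boxImage_le _ w)
    _ = 2 ^ n * ∏ i, L i := by simp [prod_mul_distrib]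

end Box

noncomputable def sqWeight {n : ℕ} (i : Fin n) : ℝ :=
  2 ^ (-(((i : ℕ) + 1 : ℤ) ^ 2))

theorem An_eq_boxImage (n : ℕ) :
    An n = boxImage (fun i : Fin n => 2 ^ ((i : ℕ) + 1)) sqWeight :=
  rfl

def digitFun {n : ℕ} {L : Fin n → ℕ} (a : (i : Fin n) → Fin (L i)) (i : ℕ) : ℕ :=
  if h : i < n then a ⟨i, h⟩ else 0

theorem boxSum_sqWeight_mul_two_pow {n : ℕ} {L : Fin n → ℕ} (a : (i : Fin n) → Fin (L i)) :
    boxSum sqWeight a * 2 ^ (n ^ 2) = blockSum (digitFun a + 1) n := by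
  rw [boxSum, sum_mul, blockSum, Nat.cast_sum, sum_range]
  refine sum_congr rfl fun i _ => ?_
  have hin : ((i : ℕ) + 1) ^ 2 ≤ n ^ 2 := Nat.pow_le_pow_left i.2 2
  rw [Pi.add_apply, Pi.one_apply, digitFun, dif_pos i.2, Nat.cast_mul, Nat.cast_pow,
    Nat.cast_ofNat, pow_sub₀ _ two_ne_zero hin, mul_assoc, sqWeight, zpow_neg,
    mul_comm (2 ^ (n ^ 2) : ℝ)]
  norm_cast

theorem boxSum_sqWeight_injective (n : ℕ) :
    Function.Injective
      (boxSum sqWeight : ((i : Fin n) → Fin (2 ^ ((i : ℕ) + 1))) → ℝ) := by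
  intro a b hab
  have hdigit_lt (c : (i : Fin n) → Fin (2 ^ ((i : ℕ) + 1))) :
      ∀ i < n, digitFun c i < 2 ^ (2 * i + 1) := by
    intro i hi
    rw [digitFun, dif_pos hi]
    exact (c ⟨i, hi⟩).2.trans_le
      (Nat.pow_le_pow_right two_pos (show i + 1 ≤ 2 * i + 1 by omega))
  have hblock : blockSum (digitFun a) n = blockSum (digitFun b) n := by
    have hscaled := congrArg (· * (2 : ℝ) ^ (n ^ 2)) hab
    simp only [boxSum_sqWeight_mul_two_pow, Nat.cast_inj, blockSum_add] at hscaled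
    exact Nat.add_right_cancel hscaled
  funext i
  simpa [digitFun, Fin.ext_iff] using eq_of_blockSum_eq (hdigit_lt a) (hdigit_lt b) hblock i i.2

theorem card_An (n : ℕ) : #(An n) = ∏ i : Fin n, 2 ^ ((i : ℕ) + 1) := by
  rw [An_eq_boxImage]
  exact card_boxImage (boxSum_sqWeight_injective n)

theorem card_An_eq_two_pow (n : ℕ) : #(An n) = 2 ^ (n * (n + 1) / 2) := by
  rw [card_An, prod_pow_eq_pow_sum, Fin.sum_univ_eq_sum_range (· + 1), ← sum_range_succ'
    (fun i => i) n |>.trans (add_zero _), sum_range_id, Nat.add_sub_cancel, mul_comm]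

theorem card_An_add_le (n : ℕ) : #(An n + An n) ≤ 2 ^ n * #(An n) := by
  rw [card_An, An_eq_boxImage]
  exact card_boxImage_add_le _ _

theorem inv_le_abs_sub_of_mul_eq_natCast {x y c : ℝ} {p q : ℕ} (hc : 0 < c)
    (hx : x * c = p) (hy : y * c = q) (hxy : x ≠ y) : c⁻¹ ≤ |x - y| := by
  have hpq : (p : ℤ) - q ≠ 0 := by
    rw [sub_ne_zero, Nat.cast_inj.ne]
    rintro rfl
    exact hxy (mul_right_cancel₀ hc.ne' (hx.trans hy.symm))
  rw [inv_le_iff_one_le_mul₀ hc, ← abs_of_pos hc, ← abs_mul, sub_mul, hx, hy]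
  exact_mod_cast Int.one_le_abs hpq

theorem inv_two_pow_sq_le_abs_sub {n : ℕ} {x y : ℝ} (hx : x ∈ An n) (hy : y ∈ An n)
    (hxy : x ≠ y) : ((2 : ℝ) ^ (n ^ 2))⁻¹ ≤ |x - y| := by
  rw [An_eq_boxImage] at hx hy
  obtain ⟨a, -, rfl⟩ := mem_image.1 hx
  obtain ⟨b, -, rfl⟩ := mem_image.1 hy
  exact inv_le_abs_sub_of_mul_eq_natCast (by positivity) (boxSum_sqWeight_mul_two_pow a)
    (boxSum_sqWeight_mul_two_pow b) hxy

theorem tendsto_log_div_log_of_le_of_le_mul {α : Type*} {l : Filter α} {a s c : α → ℝ}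
    (ha : ∀ᶠ x in l, 1 < a x) (hlow : ∀ x, a x ≤ s x) (hup : ∀ x, s x ≤ c x * a x)
    (hc : Tendsto (fun x => Real.log (c x) / Real.log (a x)) l (nhds 0)) :
    Tendsto (fun x => Real.log (s x) / Real.log (a x)) l (nhds 1) := by
  refine tendsto_of_tendsto_of_tendsto_of_le_of_le' tendsto_const_nhds
    (by simpa using hc.const_add 1) ?_ ?_
  · filter_upwards [ha] with x hx
    rw [le_div_iff₀ (Real.log_pos hx), one_mul]
    exact Real.log_le_log (by linarith) (hlow x)
  · filter_upwards [ha] with x hx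
    have hcx : 0 < c x := by nlinarith [hlow x, hup x]
    calc Real.log (s x) / Real.log (a x) ≤ Real.log (c x * a x) / Real.log (a x) :=
          div_le_div_of_nonneg_right (Real.log_le_log (by linarith [hlow x]) (hup x))
            (Real.log_pos hx).le
      _ = 1 + Real.log (c x) / Real.log (a x) := by
          rw [Real.log_mul hcx.ne' (by positivity), add_div, div_self (Real.log_pos hx).ne',
            add_comm]

theorem tendsto_log_two_pow_div_log_card_An :
    Tendsto (fun n : ℕ => Real.log (2 ^ n) / Real.log (#(An n))) atTop (nhds 0) := by
  have hratio : ∀ᶠ n : ℕ in atTop,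
      2 * (1 / ((n : ℝ) + 1)) = Real.log (2 ^ n) / Real.log (#(An n)) := by
    filter_upwards [eventually_ne_atTop 0] with n hn
    have hk : ((n * (n + 1) / 2 : ℕ) : ℝ) = n * (n + 1) / 2 := by
      rw [Nat.cast_div (Nat.even_mul_succ_self n).two_dvd two_ne_zero, Nat.cast_mul,
        Nat.cast_succ, Nat.cast_two]
    have hlog2 : Real.log 2 ≠ 0 := (Real.log_pos one_lt_two).ne'
    rw [card_An_eq_two_pow, Nat.cast_pow, Nat.cast_ofNat, Real.log_pow, Real.log_pow, hk]
    field_simp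
  simpa using (tendsto_one_div_add_atTop_nhds_zero_nat.const_mul 2).congr' hratio

/-- `|A_n| = 2^{n(n+1)/2}`, distinct points of `A_n` are `4^{−n²}`-separated,
`|A_n + A_n| ≤ 2ⁿ |A_n|`, and hence `log|A_n+A_n|/log|A_n| → 1`. -/
theorem An_gap_example :
    (∀ n : ℕ, 1 ≤ n → (An n).card = 2 ^ (n * (n + 1) / 2)) ∧
    (∀ n : ℕ, 1 ≤ n → ∀ x ∈ An n, ∀ y ∈ An n, x ≠ y →
      |x - y| ≥ (4 : ℝ) ^ (-((n : ℤ) ^ 2))) ∧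
    (∀ n : ℕ, 1 ≤ n → ((An n + An n).card : ℝ) ≤ 2 ^ n * (An n).card) ∧
    Tendsto (fun n : ℕ =>
        Real.log ((An n + An n).card) / Real.log ((An n).card))
      atTop (nhds 1) := by
  refine ⟨fun n _ => card_An_eq_two_pow n, fun n _ x hx y hy hxy => ?_,
    fun n _ => mod_cast card_An_add_le n, ?_⟩
  · calc (4 : ℝ) ^ (-((n : ℤ) ^ 2)) = ((4 : ℝ) ^ (n ^ 2))⁻¹ := by
          rw [zpow_neg, ← Nat.cast_pow, zpow_natCast]
      _ ≤ ((2 : ℝ) ^ (n ^ 2))⁻¹ :=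
          inv_anti₀ (by positivity) (pow_le_pow_left₀ zero_le_two (by norm_num) _)
      _ ≤ |x - y| := inv_two_pow_sq_le_abs_sub hx hy hxy
  · have hcard_gt_one : ∀ᶠ n : ℕ in atTop, 1 < ((An n).card : ℝ) := by
      filter_upwards [eventually_ge_atTop 1] with n hn
      rw [card_An_eq_two_pow, Nat.cast_pow, Nat.cast_ofNat]
      exact one_lt_pow₀ one_lt_two (Nat.div_pos (by nlinarith) two_pos).ne'
    have hAn_nonempty (n : ℕ) : (An n).Nonempty := univ_nonempty.image _
    exact tendsto_log_div_log_of_le_of_le_mul hcard_gt_one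
      (fun n => mod_cast card_le_card_add_right (hAn_nonempty n))
      (fun n => mod_cast card_An_add_le n) tendsto_log_two_pow_div_log_card_An
end
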